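/- arXiv:2205.14387 — 6 statements merged into one kernel-verified Lean document; each statement's English description precedes it below -/
import Mathlib

section
/- Assume additive separability: for every (i,j) ∈ I × J, Φ̃_{ij} − ε_{i,y(j)} − η_{x(i),j} = U_{x(i),y(j)} + V_{x(i),y(j)}. If (d,u,v) is stable, then every worker i ∈ I satisfies u_i ≥ max_{y ∈ Y₀} (U_{x(i),y} + ε_{iy}), and every worker i that is matched to some slot j in d satisfies u_i = max_{y ∈ Y₀} (U_{x(i),y} + ε_{iy}), with the maximum attained at y = y(j). -/
/-- Lemma 1, first part.
Under additive separability of the net joint surplus, in any stable profile every worker's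
equilibrium payoff is at least the discrete-choice value `max_{y ∈ Y₀} (U_{x(i),y} + ε_{iy})`,
and a matched worker attains this maximum at the type of their partner. -/
theorem stmt0 {I J X Y : Type*} [Fintype I] [Fintype J] [Fintype X] [Fintype Y]
    [Nonempty I] [Nonempty J]
    (xm : I → X) (ym : J → Y)
    (hxm : Function.Surjective xm) (hym : Function.Surjective ym)
    -- a matching: each worker and each slot appears in at most one pair
    (d : Finset (I × J))
    (hd₁ : ∀ p ∈ d, ∀ q ∈ d, p.1 = q.1 → p = q)
    (hd₂ : ∀ p ∈ d, ∀ q ∈ d, p.2 = q.2 → p = q)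
    (u : I → ℝ) (v : J → ℝ) (Φt : I → J → ℝ)
    (ε : I → Option Y → ℝ) (η : X → J → ℝ)
    -- systematic utilities: `U x y = min_{i : x(i) = x} (u i - ε i y)` and
    -- `V x y = min_{j : y(j) = y} (v j - η x j)`
    (U : X → Option Y → ℝ) (V : X → Y → ℝ)
    (hU : ∀ x y, IsLeast {r : ℝ | ∃ i, xm i = x ∧ r = u i - ε i y} (U x y))
    (hV : ∀ x y, IsLeast {r : ℝ | ∃ j, ym j = y ∧ r = v j - η x j} (V x y))
    -- additive separability
    (hsep : ∀ i j, Φt i j - ε i (some (ym j)) - η (xm i) j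
      = U (xm i) (some (ym j)) + V (xm i) (ym j))
    -- stability: individual rationality
    (hIRu : ∀ i, 0 ≤ u i) (hIRu0 : ∀ i, (∀ j, (i, j) ∉ d) → u i = 0)
    (hIRv : ∀ j, 0 ≤ v j) (hIRv0 : ∀ j, (∀ i, (i, j) ∉ d) → v j = 0)
    -- stability: no blocking pairs
    (hNB : ∀ i j, u i + v j ≥ Φt i j)
    (hNBeq : ∀ i j, (i, j) ∈ d → u i + v j = Φt i j) :
    (∀ i, u i ≥ Finset.univ.sup' Finset.univ_nonempty
        (fun y : Option Y => U (xm i) y + ε i y)) ∧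
    (∀ i j, (i, j) ∈ d →
      u i = Finset.univ.sup' Finset.univ_nonempty
        (fun y : Option Y => U (xm i) y + ε i y) ∧
      u i = U (xm i) (some (ym j)) + ε i (some (ym j))) := by
  have hlb : ∀ i (y : Option Y), U (xm i) y + ε i y ≤ u i := by
    intro i y
    have := (hU (xm i) y).2 ⟨i, rfl, rfl⟩
    linarith
  have hsup : ∀ i, u i ≥ Finset.univ.sup' Finset.univ_nonempty
      (fun y : Option Y => U (xm i) y + ε i y) := by
    intro i
    exact Finset.sup'_le _ _ fun y _ => hlb i y
  refine ⟨hsup, fun i j hij => ?_⟩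
  have h1 : U (xm i) (some (ym j)) ≤ u i - ε i (some (ym j)) :=
    (hU (xm i) (some (ym j))).2 ⟨i, rfl, rfl⟩
  have h2 : V (xm i) (ym j) ≤ v j - η (xm i) j :=
    (hV (xm i) (ym j)).2 ⟨j, rfl, rfl⟩
  have h3 := hsep i j
  have h4 := hNBeq i j hij
  have heq : u i = U (xm i) (some (ym j)) + ε i (some (ym j)) := by linarith
  refine ⟨le_antisymm ?_ (hsup i), heq⟩
  rw [heq]
  exact Finset.le_sup' (fun y : Option Y => U (xm i) y + ε i y) (Finset.mem_univ _)
end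

section
/- The function g is convex on ℝ^A. If moreover P has full support, then g is strictly convex in every non-constant direction: for all U¹, U² ∈ ℝ^A such that U¹ − U² is not a constant function on A, and all s ∈ (0,1), s·g(U¹) + (1−s)·g(U²) > g(s·U¹ + (1−s)·U²). In particular, if the utility of a distinguished outside alternative a₀ ∈ A is fixed to 0, then g is strictly convex as a function of the remaining coordinates. -/
open MeasureTheory

noncomputable section

variable {A : Type*} [Fintype A] [Nonempty A]

/-- The expected-maximum (social surplus) function
`g(U) = ∫ max_{a ∈ A} (U_a + ε_a) dP(ε)`. -/
def gfun (P : Measure (A → ℝ)) (U : A → ℝ) : ℝ :=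
  ∫ ε, (Finset.univ.sup' Finset.univ_nonempty fun a => U a + ε a) ∂P

/-- The choice probability `p_a(U) = P({ε : U_a + ε_a > U_b + ε_b for all b ≠ a})`. -/
def choiceProb (P : Measure (A → ℝ)) (U : A → ℝ) (a : A) : ℝ :=
  (P {ε | ∀ b, b ≠ a → U b + ε b < U a + ε a}).toReal

/-- `P` has full support: every nonempty open set has positive measure. -/
def FullSupport (P : Measure (A → ℝ)) : Prop :=
  ∀ s : Set (A → ℝ), IsOpen s → s.Nonempty → 0 < P s

/-- Ties are `P`-null at `U`: the event that the maximum of `a ↦ U_a + ε_a`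
is attained at more than one alternative has probability zero. -/
def TiesNull (P : Measure (A → ℝ)) (U : A → ℝ) : Prop :=
  P {ε | ∃ a b : A, a ≠ b ∧ (∀ c, U c + ε c ≤ U a + ε a) ∧ (∀ c, U c + ε c ≤ U b + ε b)} = 0

lemma contSup (V : A → ℝ) :
    Continuous fun ε : A → ℝ => Finset.univ.sup' Finset.univ_nonempty fun c => V c + ε c :=
  Continuous.finset_sup'_apply Finset.univ_nonempty fun c _ =>
    continuous_const.add (continuous_apply c)

lemma intSup (P : Measure (A → ℝ)) [IsProbabilityMeasure P]
    (hint : Integrable (fun ε : A → ℝ =>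
      Finset.univ.sup' Finset.univ_nonempty fun a => |ε a|) P) (V : A → ℝ) :
    Integrable (fun ε : A → ℝ =>
      Finset.univ.sup' Finset.univ_nonempty fun c => V c + ε c) P := by
  set C := Finset.univ.sup' Finset.univ_nonempty fun c => |V c| with hC
  have hC0 : 0 ≤ C := le_trans (abs_nonneg _) (Finset.le_sup' (fun c => |V c|) (Finset.mem_univ (Classical.arbitrary A)))
  have hb : Integrable (fun ε : A → ℝ =>
      C + Finset.univ.sup' Finset.univ_nonempty fun a => |ε a|) P :=
    (integrable_const C).add hint
  refine hb.mono ((contSup V).aestronglyMeasurable) (Filter.Eventually.of_forall fun ε => ?_)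
  have hε0 : 0 ≤ Finset.univ.sup' Finset.univ_nonempty fun a => |ε a| :=
    le_trans (abs_nonneg _) (Finset.le_sup' (fun a => |ε a|) (Finset.mem_univ (Classical.arbitrary A)))
  have hRHS : abs (C + (Finset.univ.sup' Finset.univ_nonempty fun a => |ε a|)) =
      C + (Finset.univ.sup' Finset.univ_nonempty fun a => |ε a|) := abs_of_nonneg (by linarith)
  rw [Real.norm_eq_abs, Real.norm_eq_abs, hRHS, abs_le]
  constructor
  · obtain ⟨a⟩ := ‹Nonempty A›
    have h1 : V a + ε a ≤ Finset.univ.sup' Finset.univ_nonempty fun c => V c + ε c :=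
      Finset.le_sup' (fun c => V c + ε c) (Finset.mem_univ a)
    have h2 : |V a| ≤ C := Finset.le_sup' (fun c => |V c|) (Finset.mem_univ a)
    have h3 : |ε a| ≤ Finset.univ.sup' Finset.univ_nonempty fun a => |ε a| :=
      Finset.le_sup' (fun a => |ε a|) (Finset.mem_univ a)
    have h4 : -(|V a| + |ε a|) ≤ V a + ε a := by
      have := neg_abs_le (V a); have := neg_abs_le (ε a); linarith
    linarith
  · refine Finset.sup'_le _ _ fun c _ => ?_
    have h2 : |V c| ≤ C := Finset.le_sup' (fun c => |V c|) (Finset.mem_univ c)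
    have h3 : |ε c| ≤ Finset.univ.sup' Finset.univ_nonempty fun a => |ε a| :=
      Finset.le_sup' (fun a => |ε a|) (Finset.mem_univ c)
    have := le_abs_self (V c); have := le_abs_self (ε c)
    linarith

lemma sup_mix_le (U₁ U₂ ε : A → ℝ) {s t : ℝ} (hs : 0 ≤ s) (ht : 0 ≤ t) (hst : s + t = 1) :
    (Finset.univ.sup' Finset.univ_nonempty fun c => (s • U₁ + t • U₂) c + ε c) ≤
      s * (Finset.univ.sup' Finset.univ_nonempty fun c => U₁ c + ε c) +
      t * (Finset.univ.sup' Finset.univ_nonempty fun c => U₂ c + ε c) := by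
  refine Finset.sup'_le _ _ fun c _ => ?_
  have h1 : U₁ c + ε c ≤ Finset.univ.sup' Finset.univ_nonempty fun c => U₁ c + ε c :=
    Finset.le_sup' (fun c => U₁ c + ε c) (Finset.mem_univ c)
  have h2 : U₂ c + ε c ≤ Finset.univ.sup' Finset.univ_nonempty fun c => U₂ c + ε c :=
    Finset.le_sup' (fun c => U₂ c + ε c) (Finset.mem_univ c)
  have e : (s • U₁ + t • U₂) c + ε c = s * (U₁ c + ε c) + t * (U₂ c + ε c) := by
    simp only [Pi.add_apply, Pi.smul_apply, smul_eq_mul]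
    have h' : s * (U₁ c + ε c) + t * (U₂ c + ε c) = s * U₁ c + t * U₂ c + (s + t) * ε c := by
      ring
    rw [h', hst, one_mul]
  rw [e]
  exact add_le_add (mul_le_mul_of_nonneg_left h1 hs) (mul_le_mul_of_nonneg_left h2 ht)


lemma strictGap (P : Measure (A → ℝ)) [IsProbabilityMeasure P]
    (hint : Integrable (fun ε : A → ℝ =>
      Finset.univ.sup' Finset.univ_nonempty fun a => |ε a|) P)
    (hfs : FullSupport P) (U₁ U₂ : A → ℝ) (a b : A) (hab : a ≠ b)
    (hd : U₁ b - U₂ b < U₁ a - U₂ a) (s : ℝ) (hs : 0 < s) (hs1 : s < 1) :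
    gfun P (s • U₁ + (1 - s) • U₂) < s * gfun P U₁ + (1 - s) * gfun P U₂ := by
  classical
  unfold gfun
  set d : A → ℝ := fun c => U₁ c - U₂ c with hdd
  set S : ℝ := Finset.univ.sup' Finset.univ_nonempty fun c => |d c| with hS
  have hSc : ∀ c, |d c| ≤ S := fun c => Finset.le_sup' (fun c => |d c|) (Finset.mem_univ c)
  have hS0 : 0 ≤ S := le_trans (abs_nonneg _) (hSc a)
  set δ : ℝ := d a - d b with hδ
  have hδ0 : 0 < δ := by simp only [hδ, hdd]; linarith
  set M : ℝ := 1 + 2 * S with hM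
  set t : A → ℝ := fun c => if c = a then δ / 2 else if c = b then δ else -M with ht
  set ε₀ : A → ℝ := fun c => -U₂ c + t c with hε₀
  have hx1 : ∀ c, U₁ c + ε₀ c = d c + t c := fun c => by simp [hε₀, hdd]; ring
  have hy1 : ∀ c, U₂ c + ε₀ c = t c := fun c => by simp [hε₀]
  have hta : t a = δ / 2 := by simp [ht]
  have htb : t b = δ := by simp [ht, hab.symm]
  clear_value d S δ M t ε₀
  have hx : ∀ c, c ≠ a → U₁ c + ε₀ c < U₁ a + ε₀ a := by
    intro c hc
    rw [hx1, hx1, hta]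
    by_cases hcb : c = b
    · subst hcb; rw [htb]; simp only [hδ]; linarith
    · have htc : t c = -M := by simp [ht, hc, hcb]
      rw [htc, hM]
      have h1 := hSc c; have h2 := hSc a
      have h3 := le_abs_self (d c); have h4 := neg_abs_le (d a)
      nlinarith
  have hy : ∀ c, c ≠ b → U₂ c + ε₀ c < U₂ b + ε₀ b := by
    intro c hc
    rw [hy1, hy1, htb]
    by_cases hca : c = a
    · subst hca; rw [hta]; linarith
    · have htc : t c = -M := by simp [ht, hca, hc]
      rw [htc, hM]; nlinarith
  have hx' : ∀ c, U₁ c + ε₀ c ≤ U₁ a + ε₀ a := by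
    intro c; by_cases hc : c = a
    · subst hc; exact le_refl _
    · exact (hx c hc).le
  have hy' : ∀ c, U₂ c + ε₀ c ≤ U₂ b + ε₀ b := by
    intro c; by_cases hc : c = b
    · subst hc; exact le_refl _
    · exact (hy c hc).le
  set F₁ : (A → ℝ) → ℝ := fun ε => Finset.univ.sup' Finset.univ_nonempty fun c => U₁ c + ε c
    with hF₁
  set F₂ : (A → ℝ) → ℝ := fun ε => Finset.univ.sup' Finset.univ_nonempty fun c => U₂ c + ε c
    with hF₂
  set F₀ : (A → ℝ) → ℝ := fun ε =>
    Finset.univ.sup' Finset.univ_nonempty fun c => (s • U₁ + (1 - s) • U₂) c + ε c with hF₀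
  set f : (A → ℝ) → ℝ := fun ε => s * F₁ ε + (1 - s) * F₂ ε - F₀ ε with hf
  have hf0 : ∀ ε, 0 ≤ f ε := fun ε => by
    have := sup_mix_le U₁ U₂ ε hs.le (by linarith : (0:ℝ) ≤ 1 - s) (by ring)
    simp only [hf, hF₀, hF₁, hF₂]; linarith
  have hfcont : Continuous f := by
    rw [hf, hF₀, hF₁, hF₂]
    exact ((continuous_const.mul (contSup U₁)).add (continuous_const.mul (contSup U₂))).sub
      (contSup _)
  have h1 : Integrable (fun ε => s * F₁ ε) P := by
    rw [hF₁]; exact (intSup P hint U₁).const_mul s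
  have h2 : Integrable (fun ε => (1 - s) * F₂ ε) P := by
    rw [hF₂]; exact (intSup P hint U₂).const_mul (1 - s)
  have h12 : Integrable (fun ε => s * F₁ ε + (1 - s) * F₂ ε) P := h1.add h2
  have h0 : Integrable F₀ P := by rw [hF₀]; exact intSup P hint _
  have hfint : Integrable f P := by rw [hf]; exact h12.sub h0
  have hmixε : ∀ c, (s • U₁ + (1 - s) • U₂) c + ε₀ c
      = s * (U₁ c + ε₀ c) + (1 - s) * (U₂ c + ε₀ c) := by
    intro c
    simp only [Pi.add_apply, Pi.smul_apply, smul_eq_mul]; ring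
  have hfε₀ : 0 < f ε₀ := by
    have hFlt : F₀ ε₀ < s * (U₁ a + ε₀ a) + (1 - s) * (U₂ b + ε₀ b) := by
      rw [hF₀]
      refine (Finset.sup'_lt_iff _).2 fun c _ => ?_
      rw [hmixε c]
      by_cases hc : c = a
      · rw [hc]
        have ha1 : U₂ a + ε₀ a < U₂ b + ε₀ b := hy a hab
        nlinarith
      · have ha1 : U₁ c + ε₀ c < U₁ a + ε₀ a := hx c hc
        have ha2 : U₂ c + ε₀ c ≤ U₂ b + ε₀ b := hy' c
        nlinarith
    have hG1 : U₁ a + ε₀ a ≤ F₁ ε₀ := Finset.le_sup' (fun c => U₁ c + ε₀ c) (Finset.mem_univ a)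
    have hG2 : U₂ b + ε₀ b ≤ F₂ ε₀ := Finset.le_sup' (fun c => U₂ c + ε₀ c) (Finset.mem_univ b)
    simp only [hf]
    nlinarith
  have hpos : 0 < ∫ ε, f ε ∂P := by
    rw [integral_pos_iff_support_of_nonneg hf0 hfint]
    refine lt_of_lt_of_le (hfs (f ⁻¹' Set.Ioi 0) (isOpen_Ioi.preimage hfcont) ⟨ε₀, hfε₀⟩) ?_
    exact measure_mono fun ε hε => ne_of_gt hε
  have hsub : ∫ ε, f ε ∂P =
      s * (∫ ε, F₁ ε ∂P) + (1 - s) * (∫ ε, F₂ ε ∂P) - ∫ ε, F₀ ε ∂P := by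
    rw [hf]
    rw [integral_sub h12 h0, integral_add h1 h2, integral_const_mul, integral_const_mul]
  rw [hsub] at hpos
  show (∫ ε, F₀ ε ∂P) < s * (∫ ε, F₁ ε ∂P) + (1 - s) * (∫ ε, F₂ ε ∂P)
  linarith

/-- `g` is convex; with full support it is strictly convex in every
non-constant direction; in particular, fixing the utility of an outside alternative `a₀`
to `0`, `g` is strictly convex in the remaining coordinates. -/
theorem stmt4 [DecidableEq A] (P : Measure (A → ℝ)) [IsProbabilityMeasure P]
    (hint : Integrable (fun ε : A → ℝ =>
      Finset.univ.sup' Finset.univ_nonempty fun a => |ε a|) P) :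
    ConvexOn ℝ Set.univ (gfun P) ∧
    (FullSupport P →
      (∀ U₁ U₂ : A → ℝ, (¬ ∃ c : ℝ, ∀ a, U₁ a - U₂ a = c) →
        ∀ s : ℝ, 0 < s → s < 1 →
          gfun P (s • U₁ + (1 - s) • U₂) < s * gfun P U₁ + (1 - s) * gfun P U₂) ∧
      (∀ a₀ : A, StrictConvexOn ℝ Set.univ
        (fun U : {a : A // a ≠ a₀} → ℝ =>
          gfun P (fun a => if h : a = a₀ then 0 else U ⟨a, h⟩)))) := by
  have hconv : ConvexOn ℝ Set.univ (gfun P) := by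
    refine ⟨convex_univ, fun x _ y _ a b ha hb hab => ?_⟩
    simp only [smul_eq_mul]
    unfold gfun
    have hia : Integrable (fun ε : A → ℝ =>
        a * Finset.univ.sup' Finset.univ_nonempty fun c => x c + ε c) P :=
      (intSup P hint x).const_mul a
    have hib : Integrable (fun ε : A → ℝ =>
        b * Finset.univ.sup' Finset.univ_nonempty fun c => y c + ε c) P :=
      (intSup P hint y).const_mul b
    calc (∫ ε, (Finset.univ.sup' Finset.univ_nonempty fun c => (a • x + b • y) c + ε c) ∂P)
        ≤ ∫ ε, (a * (Finset.univ.sup' Finset.univ_nonempty fun c => x c + ε c) +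
            b * (Finset.univ.sup' Finset.univ_nonempty fun c => y c + ε c)) ∂P :=
          integral_mono (intSup P hint _) (hia.add hib)
            (fun ε => sup_mix_le x y ε ha hb hab)
      _ = a * (∫ ε, (Finset.univ.sup' Finset.univ_nonempty fun c => x c + ε c) ∂P) +
          b * (∫ ε, (Finset.univ.sup' Finset.univ_nonempty fun c => y c + ε c) ∂P) := by
          rw [integral_add hia hib, integral_const_mul, integral_const_mul]
  refine ⟨hconv, fun hfs => ?_⟩
  have hstrict : ∀ U₁ U₂ : A → ℝ, (¬ ∃ c : ℝ, ∀ a, U₁ a - U₂ a = c) →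
      ∀ s : ℝ, 0 < s → s < 1 →
        gfun P (s • U₁ + (1 - s) • U₂) < s * gfun P U₁ + (1 - s) * gfun P U₂ := by
    intro U₁ U₂ hnc s hs hs1
    obtain ⟨a, b, hab⟩ : ∃ a b : A, U₁ a - U₂ a ≠ U₁ b - U₂ b := by
      by_contra h
      push_neg at h
      exact hnc ⟨U₁ (Classical.arbitrary A) - U₂ (Classical.arbitrary A), fun a => h a _⟩
    have hne : a ≠ b := fun h => hab (by rw [h])
    rcases lt_or_gt_of_ne hab with h | h
    · exact strictGap P hint hfs U₁ U₂ b a hne.symm h s hs hs1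
    · exact strictGap P hint hfs U₁ U₂ a b hne h s hs hs1
  refine ⟨hstrict, fun a₀ => ?_⟩
  refine ⟨convex_univ, fun x _ y _ hxy a b ha hb hab => ?_⟩
  set U₁ : A → ℝ := fun c => if h : c = a₀ then 0 else x ⟨c, h⟩ with hU₁
  set U₂ : A → ℝ := fun c => if h : c = a₀ then 0 else y ⟨c, h⟩ with hU₂
  have hb' : b = 1 - a := by linarith
  have hnc : ¬ ∃ c : ℝ, ∀ a, U₁ a - U₂ a = c := by
    rintro ⟨c, hc⟩
    have h0 := hc a₀
    simp [hU₁, hU₂] at h0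
    apply hxy
    funext i
    have hi := hc i.1
    simp only [hU₁, hU₂, dif_neg i.2] at hi
    rw [← h0] at hi
    have : x i = y i := by simpa using sub_eq_zero.mp hi
    exact this
  have hmix : (fun c => if h : c = a₀ then 0 else (a • x + b • y) ⟨c, h⟩)
      = a • U₁ + (1 - a) • U₂ := by
    funext c
    by_cases h : c = a₀ <;> simp [hU₁, hU₂, h, hb']
  show gfun P (fun c => if h : c = a₀ then 0 else (a • x + b • y) ⟨c, h⟩)
      < a • gfun P U₁ + b • gfun P U₂
  rw [hmix, smul_eq_mul, smul_eq_mul, hb']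
  exact hstrict U₁ U₂ hnc a ha (by linarith)

end
end

section
/- If P is absolutely continuous with respect to Lebesgue measure on ℝ^A, then g is differentiable at every U ∈ ℝ^A, and for every a ∈ A the partial derivative satisfies ∂g/∂U_a(U) = p_a(U) (Daly–Zachary–Williams: the gradient of the expected maximum equals the vector of choice probabilities). -/
/-! Ties `U_a + ε_a = U_b + ε_b` lie on finitely many affine hyperplanes, which are Lebesgue-null
and hence `P`-null, so for almost every `ε` the maximum of `U_a + ε_a` is attained at a unique
alternative `a`. Near `U` the maximum is then the single coordinate `V_a + ε_a`, whose derivative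
is the projection onto `a`. Since the maximum is 1-Lipschitz in `U` for the sup norm, it can be
differentiated under the integral, and the expected projection is `∑_a p_a(U) • proj_a`. -/

open MeasureTheory

noncomputable section

variable {A : Type*} [Fintype A] [Nonempty A]

open Filter Topology

theorem Finset.abs_sup'_sub_sup'_le {ι : Type*} {s : Finset ι} (hs : s.Nonempty) {f g : ι → ℝ}
    {c : ℝ} (h : ∀ i ∈ s, |f i - g i| ≤ c) : |s.sup' hs f - s.sup' hs g| ≤ c := by
  have key : ∀ f g : ι → ℝ, (∀ i ∈ s, f i ≤ g i + c) → s.sup' hs f - s.sup' hs g ≤ c :=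
    fun f g hfg => sub_le_iff_le_add'.2 <| Finset.sup'_le _ _ fun i hi =>
      (hfg i hi).trans (add_le_add_left (Finset.le_sup' g hi) c)
  refine abs_sub_le_iff.2 ⟨key f g fun i hi => ?_, key g f fun i hi => ?_⟩ <;>
    linarith [abs_le.1 (h i hi)]

theorem MeasureTheory.Measure.addHaar_setOf_apply_eq_apply {ι : Type*} [Fintype ι]
    (μ : Measure (ι → ℝ)) [μ.IsAddHaarMeasure] {a b : ι} (hab : a ≠ b) :
    μ {x | x a = x b} = 0 := by
  classical
  let f : (ι → ℝ) →ₗ[ℝ] ℝ := (LinearMap.proj a : (ι → ℝ) →ₗ[ℝ] ℝ) - LinearMap.proj b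
  have hker : {x : ι → ℝ | x a = x b} = LinearMap.ker f := by ext x; simp [f, sub_eq_zero]
  rw [hker]
  refine Measure.addHaar_submodule μ (LinearMap.ker f) fun htop => ?_
  have : f (Pi.single a 1) = 0 := by rw [← LinearMap.mem_ker, htop]; trivial
  simp [f, hab] at this

section DalyZacharyWilliams

variable {ι : Type*}

def choiceEvent (U : ι → ℝ) (a : ι) : Set (ι → ℝ) :=
  {ε | ∀ b, b ≠ a → U b + ε b < U a + ε a}

theorem isOpen_choiceEvent [Finite ι] (U : ι → ℝ) (a : ι) : IsOpen (choiceEvent U a) := by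
  simp only [choiceEvent, Set.ofPred_forall]
  exact isOpen_iInter_of_finite fun b => isOpen_iInter_of_finite fun _ =>
    isOpen_lt (by fun_prop) (by fun_prop)

theorem notMem_choiceEvent_of_mem {U ε : ι → ℝ} {a b : ι} (ha : ε ∈ choiceEvent U a)
    (hb : b ≠ a) : ε ∉ choiceEvent U b :=
  fun h => lt_asymm (ha b hb) (h a hb.symm)

theorem ae_exists_mem_choiceEvent [Fintype ι] [Nonempty ι] {P : Measure (ι → ℝ)}
    (hac : P ≪ volume) (U : ι → ℝ) : ∀ᵐ ε ∂P, ∃ a, ε ∈ choiceEvent U a := by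
  have hnoTie : ∀ᵐ ε ∂P, ∀ a b, a ≠ b → U a + ε a ≠ U b + ε b := by
    refine ae_all_iff.2 fun a => ae_all_iff.2 fun b => ?_
    rcases eq_or_ne a b with rfl | hab
    · simp
    refine hac.ae_le (ae_iff.2 ?_)
    simp only [hab, ne_eq, not_false_eq_true, forall_const, not_not]
    have : {ε : ι → ℝ | U a + ε a = U b + ε b} = (· + U) ⁻¹' {x | x a = x b} := by
      ext ε; simp [add_comm]
    rw [this, measure_preimage_add_right]
    exact Measure.addHaar_setOf_apply_eq_apply volume hab
  filter_upwards [hnoTie] with ε hε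
  obtain ⟨a, ha⟩ := Finite.exists_max fun a => U a + ε a
  exact ⟨a, fun b hb => (ha b).lt_of_ne (hε b a hb)⟩

section Max

variable [Fintype ι] [Nonempty ι]

theorem abs_sup'_add_sub_sup'_add_le (U V ε : ι → ℝ) :
    |(Finset.univ.sup' Finset.univ_nonempty fun b => V b + ε b) -
      Finset.univ.sup' Finset.univ_nonempty fun b => U b + ε b| ≤ ‖V - U‖ :=
  Finset.abs_sup'_sub_sup'_le _ fun b _ => by simpa using norm_le_pi_norm (V - U) b

theorem integrable_sup'_add {P : Measure (ι → ℝ)} [IsFiniteMeasure P]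
    (hint : Integrable (fun ε : ι → ℝ => Finset.univ.sup' Finset.univ_nonempty fun a => |ε a|) P)
    (U : ι → ℝ) :
    Integrable (fun ε : ι → ℝ => Finset.univ.sup' Finset.univ_nonempty fun a => U a + ε a) P := by
  refine Integrable.mono' (hint.add (integrable_const ‖U‖))
    (Continuous.finset_sup'_apply _ fun a _ => by fun_prop).aestronglyMeasurable
    (ae_of_all _ fun ε => ?_)
  have := Finset.abs_sup'_sub_sup'_le Finset.univ_nonempty (f := fun a => U a + ε a) (g := 0)
    (c := (Finset.univ.sup' Finset.univ_nonempty fun a => |ε a|) + ‖U‖) fun a _ => by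
      have hU : |U a| ≤ ‖U‖ := by simpa using norm_le_pi_norm U a
      have hε := Finset.le_sup' (fun b => |ε b|) (Finset.mem_univ a)
      simp only [Pi.zero_apply, sub_zero]
      linarith [abs_add_le (U a) (ε a)]
  simpa using this

theorem hasFDerivAt_sup'_add_of_mem_choiceEvent {U ε : ι → ℝ} {a : ι}
    (ha : ε ∈ choiceEvent U a) :
    HasFDerivAt (fun V : ι → ℝ => Finset.univ.sup' Finset.univ_nonempty fun b => V b + ε b)
      (ContinuousLinearMap.proj a : (ι → ℝ) →L[ℝ] ℝ) U := by
  have hnear : ∀ᶠ V in 𝓝 U, ε ∈ choiceEvent V a :=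
    eventually_all.2 fun b => eventually_imp_distrib_left.2 fun hb =>
      ((continuous_apply b).add continuous_const).continuousAt.eventually_lt
        ((continuous_apply a).add continuous_const).continuousAt (ha b hb)
  refine ((hasFDerivAt_apply a U).add_const (ε a)).congr_of_eventuallyEq ?_
  filter_upwards [hnear] with V hV
  exact le_antisymm
    (Finset.sup'_le _ _ fun b _ => (eq_or_ne b a).elim (fun h => h ▸ le_rfl) fun h => (hV b h).le)
    (Finset.le_sup' (fun b => V b + ε b) (Finset.mem_univ a))

end Max

def choiceGradient [Fintype ι] (U ε : ι → ℝ) : (ι → ℝ) →L[ℝ] ℝ :=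
  ∑ a, (choiceEvent U a).indicator (fun _ => ContinuousLinearMap.proj a) ε

theorem choiceGradient_eq_proj [Fintype ι] {U ε : ι → ℝ} {a : ι} (ha : ε ∈ choiceEvent U a) :
    choiceGradient U ε = ContinuousLinearMap.proj a :=
  (Finset.sum_eq_single a (fun b _ hb => Set.indicator_of_notMem
    (notMem_choiceEvent_of_mem ha hb) _) (by simp)).trans (Set.indicator_of_mem ha _)

theorem integrable_indicator_proj [Fintype ι] (P : Measure (ι → ℝ)) [IsFiniteMeasure P]
    (U : ι → ℝ) (a : ι) :
    Integrable ((choiceEvent U a).indicator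
      fun _ => (ContinuousLinearMap.proj a : (ι → ℝ) →L[ℝ] ℝ)) P :=
  (integrable_const (μ := P) (ContinuousLinearMap.proj a : (ι → ℝ) →L[ℝ] ℝ)).indicator
    (isOpen_choiceEvent U a).measurableSet

theorem integrable_choiceGradient [Fintype ι] (P : Measure (ι → ℝ)) [IsFiniteMeasure P]
    (U : ι → ℝ) : Integrable (choiceGradient U) P :=
  integrable_finsetSum (f := fun a => (choiceEvent U a).indicator
    (fun _ => (ContinuousLinearMap.proj a : (ι → ℝ) →L[ℝ] ℝ))) _
    fun a _ => integrable_indicator_proj P U a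

theorem integral_choiceGradient [Fintype ι] (P : Measure (ι → ℝ)) [IsFiniteMeasure P]
    (U : ι → ℝ) :
    ∫ ε, choiceGradient U ε ∂P = ∑ a, P.real (choiceEvent U a) • ContinuousLinearMap.proj a := by
  unfold choiceGradient
  rw [integral_finsetSum _ fun a _ => integrable_indicator_proj P U a]
  exact Finset.sum_congr rfl fun a _ =>
    integral_indicator_const _ (isOpen_choiceEvent U a).measurableSet

theorem hasFDerivAt_gfun [Fintype ι] [Nonempty ι] {P : Measure (ι → ℝ)} [IsFiniteMeasure P]
    (hint : Integrable (fun ε : ι → ℝ => Finset.univ.sup' Finset.univ_nonempty fun a => |ε a|) P)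
    (hac : P ≪ volume) (U : ι → ℝ) :
    HasFDerivAt (gfun P)
      (∑ a, choiceProb P U a • (ContinuousLinearMap.proj a : (ι → ℝ) →L[ℝ] ℝ)) U := by
  have hderiv := (hasFDerivAt_integral_of_dominated_loc_of_lip' (x₀ := U)
    (F := fun V ε : ι → ℝ => Finset.univ.sup' Finset.univ_nonempty fun b => V b + ε b)
    (F' := choiceGradient U) (μ := P) (bound := fun _ => 1) univ_mem
    (fun V _ => (integrable_sup'_add hint V).aestronglyMeasurable) (integrable_sup'_add hint U)
    (integrable_choiceGradient P U).aestronglyMeasurable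
    (ae_of_all _ fun ε V _ => by simpa using abs_sup'_add_sub_sup'_add_le U V ε)
    (integrable_const 1)
    (by
      filter_upwards [ae_exists_mem_choiceEvent hac U] with ε ⟨a, ha⟩
      rw [choiceGradient_eq_proj ha]
      exact hasFDerivAt_sup'_add_of_mem_choiceEvent ha)).2
  rwa [integral_choiceGradient] at hderiv

end DalyZacharyWilliams

/-- Daly–Zachary–Williams. If `P` is absolutely continuous with respect
to Lebesgue measure on `ℝ^A`, then `g` is differentiable everywhere and its partial
derivatives are the choice probabilities: `∂g/∂U_a(U) = p_a(U)`. -/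
theorem stmt5 [DecidableEq A] (P : Measure (A → ℝ)) [IsProbabilityMeasure P]
    (hint : Integrable (fun ε : A → ℝ =>
      Finset.univ.sup' Finset.univ_nonempty fun a => |ε a|) P)
    (hac : P ≪ (volume : Measure (A → ℝ))) (U : A → ℝ) :
    DifferentiableAt ℝ (gfun P) U ∧
    ∀ a : A, fderiv ℝ (gfun P) U (Pi.single a 1) = choiceProb P U a := by
  have hderiv := hasFDerivAt_gfun hint hac U
  refine ⟨hderiv.differentiableAt, fun a => ?_⟩
  simp [hderiv.fderiv, Pi.single_apply]
end
end

section
/- Let U, V ∈ ℝ^{X×Y} and suppose μ : T → ℝ satisfies the market-clearing condition: μ_{xy} = n_x·p_x(y;U) for all x ∈ X, y ∈ Y₀, and μ_{xy} = m_y·q_y(x;V) for all x ∈ X₀, y ∈ Y. For each x ∈ X let Y*_x(ε) denote the P_x-almost surely unique maximizer over Y₀ of Û_{xy} + ε_y (unique a.s. by absolute continuity of P_x), and for each y ∈ Y let X*_y(η) denote the Q_y-almost surely unique maximizer over X₀ of V̂_{xy} + η_x. Then −G*(μ) − H*(μ) = Σ_{x∈X} n_x ∫ ε_{Y*_x(ε)}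 dP_x(ε) + Σ_{y∈Y} m_y ∫ η_{X*_y(η)} dQ_y(η): the unobserved part of the social surplus equals the sum of the expected error terms of the chosen alternatives. -/
/-!
Fix one agent type and write `E(f) = ∫ max_a (f_a + ε_a) dρ` for its expected indirect utility.
Since `ρ ≪ volume`, ties between alternatives have probability zero, so an a.s. maximizer `s`
of `f + ε` is a.s. the unique one. Hence `E(f) = Σ_a p_a(f) f_a + ∫ ε_{s(ε)} dρ`, and bounding
the maximum of `f' + ε` below by its value at `s(ε)` gives the gradient inequality
`E(f') ≥ E(f) + Σ_a p_a(f) (f'_a - f_a)`. Under market clearing `μ_{xy} = n_x p_x(y; U)`, the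
gradient inequality says that `U` attains the supremum defining `G*(μ)`, so
`-G*(μ) = G(U) - Σ μ_{xy} U_{xy} = Σ_x n_x ∫ ε_{Y*_x(ε)} dP_x`. The slot side is the same
statement with the roles of `X` and `Y` exchanged.
-/

open MeasureTheory

noncomputable section

variable {X Y Z : Type*} [Fintype X] [Fintype Y] [Fintype Z] [DecidableEq Z]
  [Nonempty X] [Nonempty Y]

/-- Extension `Û` of systematic utilities: the outside option `y₀` (encoded `none`)
gets utility `0`. -/
def Uhat (U : X → Y → ℝ) (x : X) (o : Option Y) : ℝ := o.elim 0 (U x)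

/-- Extension `V̂` of systematic utilities: the outside option `x₀` (encoded `none`)
gets utility `0`. -/
def Vhat (V : X → Y → ℝ) (y : Y) (o : Option X) : ℝ := o.elim 0 (fun x => V x y)

/-- Worker-side welfare `G(U) = Σ_x n_x ∫ max_{y ∈ Y₀} (Û_{xy} + ε_y) dP_x(ε)`. -/
def Gfun (n : X → ℝ) (P : X → Measure (Option Y → ℝ)) (U : X → Y → ℝ) : ℝ :=
  ∑ x, n x * ∫ ε, (Finset.univ.sup' Finset.univ_nonempty
    fun y : Option Y => Uhat U x y + ε y) ∂(P x)

/-- Slot-side welfare `H(V) = Σ_y m_y ∫ max_{x ∈ X₀} (V̂_{xy} + η_x) dQ_y(η)`. -/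
def Hfun (m : Y → ℝ) (Q : Y → Measure (Option X → ℝ)) (V : X → Y → ℝ) : ℝ :=
  ∑ y, m y * ∫ η, (Finset.univ.sup' Finset.univ_nonempty
    fun x : Option X => Vhat V y x + η x) ∂(Q y)

/-- Choice probability `p_x(y; U)` of a type-`x` worker choosing alternative `y ∈ Y₀`. -/
def cp (P : X → Measure (Option Y → ℝ)) (U : X → Y → ℝ) (x : X) (y : Option Y) : ℝ :=
  ((P x) {ε | ∀ y', y' ≠ y → Uhat U x y' + ε y' < Uhat U x y + ε y}).toReal

/-- Choice probability `q_y(x; V)` of a type-`y` slot choosing alternative `x ∈ X₀`. -/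
def cq (Q : Y → Measure (Option X → ℝ)) (V : X → Y → ℝ) (y : Y) (x : Option X) : ℝ :=
  ((Q y) {η | ∀ x', x' ≠ x → Vhat V y x' + η x' < Vhat V y x + η x}).toReal

/-- Population constraint of a matching `μ : T → ℝ` (with `T = X₀ × Y₀ ∖ {(x₀,y₀)}`,
encoded as `μ : Option X → Option Y → ℝ` with the `(none, none)` entry irrelevant). -/
def PopCon (n : X → ℝ) (m : Y → ℝ) (μ : Option X → Option Y → ℝ) : Prop :=
  (∀ x, ∑ o : Option Y, μ (some x) o = n x) ∧ (∀ y, ∑ o : Option X, μ o (some y) = m y)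

/-- Total mass of matches in region `z`. -/
def regionMass (zm : Y → Z) (μ : Option X → Option Y → ℝ) (z : Z) : ℝ :=
  ∑ x : X, ∑ y : Y, if zm y = z then μ (some x) (some y) else 0

/-- Regional constraint: each region's mass lies between its floor and ceiling. -/
def RegionCon (zm : Y → Z) (ol ou : Z → ℝ) (μ : Option X → Option Y → ℝ) : Prop :=
  ∀ z, ol z ≤ regionMass zm μ z ∧ regionMass zm μ z ≤ ou z

/-- Market clearing: `μ_{xy} = n_x p_x(y;U) = m_y q_y(x;V)` (with the obvious one-sided
conditions for the outside options). -/
def MarketClearing (n : X → ℝ) (m : Y → ℝ) (P : X → Measure (Option Y → ℝ))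
    (Q : Y → Measure (Option X → ℝ)) (μ : Option X → Option Y → ℝ)
    (U V : X → Y → ℝ) : Prop :=
  (∀ x y, μ (some x) (some y) = n x * cp P U x (some y) ∧
    μ (some x) (some y) = m y * cq Q V y (some x)) ∧
  (∀ x, μ (some x) none = n x * cp P U x none) ∧
  (∀ y, μ none (some y) = m y * cq Q V y none)

/-- Aggregate equilibrium with regional constraints. -/
def IsAE (n : X → ℝ) (m : Y → ℝ) (P : X → Measure (Option Y → ℝ))
    (Q : Y → Measure (Option X → ℝ)) (Φ : X → Y → ℝ) (zm : Y → Z) (ol ou : Z → ℝ)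
    (μ : Option X → Option Y → ℝ) (U V : X → Y → ℝ) (w : Z → ℝ) : Prop :=
  PopCon n m μ ∧
  (∀ x y, U x y + V x y ≥ Φ x y - w (zm y)) ∧
  MarketClearing n m P Q μ U V ∧
  RegionCon zm ol ou μ

/-- Efficient aggregate equilibrium: an AE satisfying complementary slackness. -/
def IsEAE (n : X → ℝ) (m : Y → ℝ) (P : X → Measure (Option Y → ℝ))
    (Q : Y → Measure (Option X → ℝ)) (Φ : X → Y → ℝ) (zm : Y → Z) (ol ou : Z → ℝ)
    (μ : Option X → Option Y → ℝ) (U V : X → Y → ℝ) (w : Z → ℝ) : Prop :=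
  IsAE n m P Q Φ zm ol ou μ U V w ∧
  ∀ z, (0 < w z → regionMass zm μ z = ou z) ∧ (w z < 0 → regionMass zm μ z = ol z)

/-- Feasibility for problem (D). -/
def FeasD (Φ : X → Y → ℝ) (zm : Y → Z) (U V : X → Y → ℝ) (wb wl : Z → ℝ) : Prop :=
  (∀ z, 0 ≤ wb z) ∧ (∀ z, 0 ≤ wl z) ∧
  ∀ x y, U x y + V x y ≥ Φ x y - wb (zm y) + wl (zm y)

/-- Objective of problem (D). -/
def objD (n : X → ℝ) (m : Y → ℝ) (P : X → Measure (Option Y → ℝ))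
    (Q : Y → Measure (Option X → ℝ)) (ol ou : Z → ℝ)
    (U V : X → Y → ℝ) (wb wl : Z → ℝ) : ℝ :=
  Gfun n P U + Hfun m Q V + ∑ z, ou z * wb z - ∑ z, ol z * wl z

/-- Optimality for problem (D): feasible and minimizing the objective among
feasible points. -/
def IsOptD (n : X → ℝ) (m : Y → ℝ) (P : X → Measure (Option Y → ℝ))
    (Q : Y → Measure (Option X → ℝ)) (Φ : X → Y → ℝ) (zm : Y → Z) (ol ou : Z → ℝ)
    (U V : X → Y → ℝ) (wb wl : Z → ℝ) : Prop :=
  FeasD Φ zm U V wb wl ∧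
  ∀ U' V' wb' wl', FeasD Φ zm U' V' wb' wl' →
    objD n m P Q ol ou U V wb wl ≤ objD n m P Q ol ou U' V' wb' wl'

/-- Legendre–Fenchel conjugate `G*(μ)`. -/
def Gstar (n : X → ℝ) (P : X → Measure (Option Y → ℝ))
    (μ : Option X → Option Y → ℝ) : ℝ :=
  ⨆ U : X → Y → ℝ, (∑ x, ∑ y, μ (some x) (some y) * U x y - Gfun n P U)

/-- Legendre–Fenchel conjugate `H*(μ)`. -/
def Hstar (m : Y → ℝ) (Q : Y → Measure (Option X → ℝ))
    (μ : Option X → Option Y → ℝ) : ℝ :=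
  ⨆ V : X → Y → ℝ, (∑ x, ∑ y, μ (some x) (some y) * V x y - Hfun m Q V)

/-- Social welfare `W(μ) = Σ_{x,y} μ_{xy} Φ_{xy} − G*(μ) − H*(μ)`. -/
def SW (n : X → ℝ) (m : Y → ℝ) (P : X → Measure (Option Y → ℝ))
    (Q : Y → Measure (Option X → ℝ)) (Φ : X → Y → ℝ)
    (μ : Option X → Option Y → ℝ) : ℝ :=
  ∑ x, ∑ y, μ (some x) (some y) * Φ x y - Gstar n P μ - Hstar m Q μ

/-- A feasible matching: nonnegative, satisfying population and regional constraints. -/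
def FeasMatch (n : X → ℝ) (m : Y → ℝ) (zm : Y → Z) (ol ou : Z → ℝ)
    (μ : Option X → Option Y → ℝ) : Prop :=
  (∀ x y, 0 ≤ μ (some x) (some y)) ∧ (∀ x, 0 ≤ μ (some x) none) ∧
  (∀ y, 0 ≤ μ none (some y)) ∧ PopCon n m μ ∧ RegionCon zm ol ou μ

open Finset

theorem volume_setOf_sub_eq_eq_zero {ι : Type*} [Fintype ι] {a b : ι} (hab : a ≠ b) (c : ℝ) :
    volume {ε : ι → ℝ | ε a - ε b = c} = 0 := by
  classical
  let L : (ι → ℝ) →ₗ[ℝ] ℝ := LinearMap.proj (R := ℝ) (φ := fun _ => ℝ) a - LinearMap.proj b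
  have hL : L ≠ 0 := fun h => by
    simpa [L, hab.symm] using LinearMap.congr_fun h (Pi.single a 1)
  have hset : {ε : ι → ℝ | ε a - ε b = c} = (· + -Pi.single a c) ⁻¹' (LinearMap.ker L) := by
    have hLc : L (Pi.single a c) = c := by simp [L, hab.symm]
    ext ε
    simp only [Set.mem_preimage, SetLike.mem_coe, LinearMap.mem_ker, map_add, map_neg, hLc,
      add_neg_eq_zero]
    rfl
  rw [hset, measure_preimage_add_right]
  exact Measure.addHaar_submodule _ _ (mt LinearMap.ker_eq_top.mp hL)

section ChoiceRegion

variable {α : Type*}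

/-- The choice probability `cp P U x a` is `(P x).real (choiceRegion (Uhat U x) a)`. -/
def choiceRegion (f : α → ℝ) (a : α) : Set (α → ℝ) :=
  {ε | ∀ b, b ≠ a → f b + ε b < f a + ε a}

theorem mem_choiceRegion_of_injective {f ε : α → ℝ} {a : α}
    (hinj : Function.Injective fun a => f a + ε a) (hmax : ∀ b, f b + ε b ≤ f a + ε a) :
    ε ∈ choiceRegion f a :=
  fun b hb => (hmax b).lt_of_ne (hinj.ne hb)

variable [Fintype α]

theorem measurableSet_choiceRegion (f : α → ℝ) (a : α) : MeasurableSet (choiceRegion f a) := by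
  simp only [choiceRegion, Set.ofPred_forall]
  exact .iInter fun b => .iInter fun _ => measurableSet_lt (by fun_prop) (by fun_prop)

theorem ae_injective_add {ρ : Measure (α → ℝ)} (hρ : ρ ≪ volume) (f : α → ℝ) :
    ∀ᵐ ε ∂ρ, Function.Injective fun a => f a + ε a := by
  have hne : ∀ a b, ∀ᵐ ε ∂ρ, a ≠ b → f a + ε a ≠ f b + ε b := by
    intro a b
    rcases eq_or_ne a b with rfl | hab
    · exact ae_of_all _ fun _ h => (h rfl).elim
    have htie : {ε : α → ℝ | f a + ε a = f b + ε b} = {ε | ε a - ε b = f b - f a} := by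
      ext ε
      show f a + ε a = f b + ε b ↔ ε a - ε b = f b - f a
      constructor <;> intro h <;> linarith
    filter_upwards [hρ.ae_le (measure_eq_zero_iff_ae_notMem.mp
      (htie ▸ volume_setOf_sub_eq_eq_zero hab (f b - f a)))] with ε hε _ heq
    exact hε heq
  filter_upwards [ae_all_iff.mpr fun a => ae_all_iff.mpr (hne a)] with ε hε a b
  exact not_imp_not.mp (hε a b)

theorem ae_mem_choiceRegion {ρ : Measure (α → ℝ)} (hρ : ρ ≪ volume) {f : α → ℝ}
    {s : (α → ℝ) → α} (hs : ∀ᵐ ε ∂ρ, ∀ b, f b + ε b ≤ f (s ε) + ε (s ε)) :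
    ∀ᵐ ε ∂ρ, ε ∈ choiceRegion f (s ε) := by
  filter_upwards [ae_injective_add hρ f, hs] with ε hinj hmax
  exact mem_choiceRegion_of_injective hinj hmax

theorem sum_indicator_choiceRegion {f ε : α → ℝ} {a : α} (h : ε ∈ choiceRegion f a)
    (F : α → (α → ℝ) → ℝ) : ∑ b, (choiceRegion f b).indicator (F b) ε = F a ε := by
  refine (Fintype.sum_eq_single a fun b hb => Set.indicator_of_notMem ?_ _).trans
    (Set.indicator_of_mem h _)
  exact fun hb' : ε ∈ choiceRegion f b => (h b hb).not_gt (hb' a hb.symm)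

end ChoiceRegion

section ChoiceIntegral

variable {α : Type*} [Fintype α] {ρ : Measure (α → ℝ)} {f : α → ℝ} {s : (α → ℝ) → α}

theorem comp_choice_ae_eq_sum_indicator (hρ : ρ ≪ volume)
    (hs : ∀ᵐ ε ∂ρ, ∀ b, f b + ε b ≤ f (s ε) + ε (s ε)) (F : α → (α → ℝ) → ℝ) :
    (fun ε => F (s ε) ε) =ᵐ[ρ] fun ε => ∑ a, (choiceRegion f a).indicator (F a) ε := by
  filter_upwards [ae_mem_choiceRegion hρ hs] with ε h
  exact (sum_indicator_choiceRegion h F).symm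

theorem integrable_comp_choice (hρ : ρ ≪ volume)
    (hs : ∀ᵐ ε ∂ρ, ∀ b, f b + ε b ≤ f (s ε) + ε (s ε)) {F : α → (α → ℝ) → ℝ}
    (hF : ∀ a, Integrable (F a) ρ) : Integrable (fun ε => F (s ε) ε) ρ :=
  (integrable_finsetSum _ fun a _ => (hF a).indicator (measurableSet_choiceRegion f a)).congr
    (comp_choice_ae_eq_sum_indicator hρ hs F).symm

theorem integral_comp_choice (hρ : ρ ≪ volume)
    (hs : ∀ᵐ ε ∂ρ, ∀ b, f b + ε b ≤ f (s ε) + ε (s ε)) {F : α → (α → ℝ) → ℝ}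
    (hF : ∀ a, Integrable (F a) ρ) :
    ∫ ε, F (s ε) ε ∂ρ = ∑ a, ∫ ε in choiceRegion f a, F a ε ∂ρ := by
  rw [integral_congr_ae (comp_choice_ae_eq_sum_indicator hρ hs F),
    integral_finsetSum _ fun a _ => (hF a).indicator (measurableSet_choiceRegion f a)]
  exact sum_congr rfl fun a _ => integral_indicator (measurableSet_choiceRegion f a)

theorem integral_comp_choice_add [IsFiniteMeasure ρ] (hρ : ρ ≪ volume)
    (hs : ∀ᵐ ε ∂ρ, ∀ b, f b + ε b ≤ f (s ε) + ε (s ε))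
    (hint : ∀ a, Integrable (fun ε => ε a) ρ) (g : α → ℝ) :
    ∫ ε, (g (s ε) + ε (s ε)) ∂ρ = ∑ a, ρ.real (choiceRegion f a) * g a + ∫ ε, ε (s ε) ∂ρ := by
  have hg : ∀ a, Integrable (fun _ : α → ℝ => g a) ρ := fun a => integrable_const _
  rw [integral_add (integrable_comp_choice hρ hs hg) (integrable_comp_choice hρ hs hint),
    integral_comp_choice hρ hs hg]
  simp only [setIntegral_const, smul_eq_mul]

end ChoiceIntegral

section ExpectedMax

variable {α : Type*} [Fintype α] [Nonempty α] {ρ : Measure (α → ℝ)}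

theorem integrable_apply_of_integrable_sup'_abs
    (hint : Integrable (fun ε => univ.sup' univ_nonempty fun a => |ε a|) ρ) (a : α) :
    Integrable (fun ε => ε a) ρ :=
  hint.mono' (measurable_pi_apply a).aestronglyMeasurable
    (ae_of_all _ fun ε => le_sup' (fun b => |ε b|) (mem_univ a))

def expectedMax (ρ : Measure (α → ℝ)) (f : α → ℝ) : ℝ :=
  ∫ ε, univ.sup' univ_nonempty (fun a => f a + ε a) ∂ρ

theorem integrable_sup'_add_s10 [IsFiniteMeasure ρ] (hint : ∀ a, Integrable (fun ε => ε a) ρ)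
    (f : α → ℝ) : Integrable (fun ε => univ.sup' univ_nonempty fun a => f a + ε a) ρ := by
  have hsup : (fun ε => univ.sup' univ_nonempty fun a => f a + ε a)
      = univ.sup' univ_nonempty fun a (ε : α → ℝ) => f a + ε a := by
    ext ε
    rw [Finset.sup'_apply]
  rw [hsup]
  exact sup'_induction (p := fun F : (α → ℝ) → ℝ => Integrable F ρ) _ _
    (fun _ h₁ _ h₂ => h₁.sup h₂) fun a _ => (integrable_const _).add (hint a)

theorem expectedMax_eq [IsFiniteMeasure ρ] (hρ : ρ ≪ volume)
    (hint : ∀ a, Integrable (fun ε => ε a) ρ) {f : α → ℝ} {s : (α → ℝ) → α}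
    (hs : ∀ᵐ ε ∂ρ, ∀ b, f b + ε b ≤ f (s ε) + ε (s ε)) :
    expectedMax ρ f = ∑ a, ρ.real (choiceRegion f a) * f a + ∫ ε, ε (s ε) ∂ρ := by
  rw [← integral_comp_choice_add hρ hs hint f]
  exact integral_congr_ae (hs.mono fun ε h =>
    le_antisymm (sup'_le _ _ fun b _ => h b) (le_sup' (fun b => f b + ε b) (mem_univ _)))

theorem expectedMax_add_sum_le [IsFiniteMeasure ρ] (hρ : ρ ≪ volume)
    (hint : ∀ a, Integrable (fun ε => ε a) ρ) (f g : α → ℝ) :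
    expectedMax ρ f + ∑ a, ρ.real (choiceRegion f a) * (g a - f a) ≤ expectedMax ρ g := by
  choose s hs using fun ε : α → ℝ => Finite.exists_max fun b => f b + ε b
  have hs' : ∀ᵐ ε ∂ρ, ∀ b, f b + ε b ≤ f (s ε) + ε (s ε) := ae_of_all _ hs
  calc expectedMax ρ f + ∑ a, ρ.real (choiceRegion f a) * (g a - f a)
      = ∫ ε, (g (s ε) + ε (s ε)) ∂ρ := by
        rw [expectedMax_eq hρ hint hs', integral_comp_choice_add hρ hs' hint g]
        simp only [mul_sub, sum_sub_distrib]
        ring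
    _ ≤ expectedMax ρ g :=
        integral_mono_ae
          (integrable_comp_choice hρ hs' (F := fun a ε => g a + ε a) fun a =>
            (integrable_const _).add (hint a))
          (integrable_sup'_add_s10 hint g)
          (ae_of_all _ fun ε => le_sup' (fun b => g b + ε b) (mem_univ (s ε)))

end ExpectedMax

section Conjugate

omit [Nonempty X]

theorem Gfun_eq_sum_expectedMax (n : X → ℝ) (P : X → Measure (Option Y → ℝ))
    (U : X → Y → ℝ) : Gfun n P U = ∑ x, n x * expectedMax (P x) (Uhat U x) := rfl

omit [Fintype X] [Nonempty Y] in
theorem mul_sum_measureReal_choiceRegion_mul_Uhat {n : X → ℝ} {P : X → Measure (Option Y → ℝ)}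
    {U : X → Y → ℝ} {μ : Option X → Option Y → ℝ} {x : X}
    (hμ : ∀ y, μ (some x) (some y) = n x * cp P U x (some y)) (W : X → Y → ℝ) :
    n x * ∑ a, (P x).real (choiceRegion (Uhat U x) a) * Uhat W x a
      = ∑ y, μ (some x) (some y) * W x y := by
  simp only [Fintype.sum_option, Uhat, Option.elim, mul_zero, zero_add, mul_sum, hμ]
  exact sum_congr rfl fun y _ => (mul_assoc _ _ _).symm

theorem Gstar_eq_sub_Gfun {n : X → ℝ} (hn : ∀ x, 0 ≤ n x) {P : X → Measure (Option Y → ℝ)}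
    [∀ x, IsFiniteMeasure (P x)] (hPac : ∀ x, P x ≪ volume)
    (hint : ∀ x a, Integrable (fun ε => ε a) (P x)) {U : X → Y → ℝ}
    {μ : Option X → Option Y → ℝ} (hμ : ∀ x y, μ (some x) (some y) = n x * cp P U x (some y)) :
    Gstar n P μ = ∑ x, ∑ y, μ (some x) (some y) * U x y - Gfun n P U := by
  refine ciSup_eq_of_forall_le_of_forall_lt_exists_gt (fun W => ?_) fun _ h => ⟨U, h⟩
  have hgrad : ∀ x, n x * expectedMax (P x) (Uhat U x)
      + (∑ y, μ (some x) (some y) * W x y - ∑ y, μ (some x) (some y) * U x y)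
      ≤ n x * expectedMax (P x) (Uhat W x) := by
    intro x
    rw [← mul_sum_measureReal_choiceRegion_mul_Uhat (hμ x),
      ← mul_sum_measureReal_choiceRegion_mul_Uhat (hμ x), ← mul_sub, ← sum_sub_distrib,
      ← mul_add]
    refine mul_le_mul_of_nonneg_left ?_ (hn x)
    simpa only [mul_sub] using expectedMax_add_sum_le (hPac x) (hint x) (Uhat U x) (Uhat W x)
  have hsum := sum_le_sum fun x (_ : x ∈ univ) => hgrad x
  simp only [sum_add_distrib, sum_sub_distrib] at hsum
  rw [Gfun_eq_sum_expectedMax, Gfun_eq_sum_expectedMax]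
  linarith

theorem neg_Gstar_eq_sum_integral {n : X → ℝ} (hn : ∀ x, 0 ≤ n x)
    {P : X → Measure (Option Y → ℝ)} [∀ x, IsFiniteMeasure (P x)] (hPac : ∀ x, P x ≪ volume)
    (hint : ∀ x a, Integrable (fun ε => ε a) (P x)) {U : X → Y → ℝ}
    {μ : Option X → Option Y → ℝ} (hμ : ∀ x y, μ (some x) (some y) = n x * cp P U x (some y))
    {Ystar : X → (Option Y → ℝ) → Option Y}
    (hYstar : ∀ x, ∀ᵐ ε ∂(P x), ∀ y : Option Y,
      Uhat U x y + ε y ≤ Uhat U x (Ystar x ε) + ε (Ystar x ε)) :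
    -Gstar n P μ = ∑ x, n x * ∫ ε, ε (Ystar x ε) ∂(P x) := by
  rw [Gstar_eq_sub_Gfun hn hPac hint hμ, neg_sub, Gfun_eq_sum_expectedMax, ← sum_sub_distrib]
  refine sum_congr rfl fun x _ => ?_
  rw [expectedMax_eq (hPac x) (hint x) (hYstar x), mul_add,
    mul_sum_measureReal_choiceRegion_mul_Uhat (hμ x)]
  ring

end Conjugate

omit [Nonempty Y] in
theorem Hstar_eq_Gstar_swap (m : Y → ℝ) (Q : Y → Measure (Option X → ℝ))
    (μ : Option X → Option Y → ℝ) : Hstar m Q μ = Gstar m Q (fun b a => μ a b) := by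
  rw [Gstar, ← (Equiv.piComm fun (_ : X) (_ : Y) => ℝ).iSup_comp]
  refine congrArg iSup (funext fun V => ?_)
  rw [sum_comm]
  rfl

theorem stmt10_general
    (n : X → ℝ) (m : Y → ℝ) (hn : ∀ x, 0 < n x) (hm : ∀ y, 0 < m y)
    (P : X → Measure (Option Y → ℝ)) (Q : Y → Measure (Option X → ℝ))
    [∀ x, IsProbabilityMeasure (P x)] [∀ y, IsProbabilityMeasure (Q y)]
    (hPac : ∀ x, P x ≪ (volume : Measure (Option Y → ℝ)))
    (hQac : ∀ y, Q y ≪ (volume : Measure (Option X → ℝ)))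
    (hPint : ∀ x, Integrable (fun ε : Option Y → ℝ =>
      Finset.univ.sup' Finset.univ_nonempty fun a => |ε a|) (P x))
    (hQint : ∀ y, Integrable (fun η : Option X → ℝ =>
      Finset.univ.sup' Finset.univ_nonempty fun a => |η a|) (Q y))
    (U V : X → Y → ℝ) (μ : Option X → Option Y → ℝ)
    (hμ : MarketClearing n m P Q μ U V)
    -- `Ystar x` is the (`P_x`-a.s. unique) maximizer selection of `y ↦ Û_{xy} + ε_y`
    (Ystar : X → (Option Y → ℝ) → Option Y)
    (hYstar : ∀ x, ∀ᵐ ε ∂(P x), ∀ y : Option Y,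
      Uhat U x y + ε y ≤ Uhat U x (Ystar x ε) + ε (Ystar x ε))
    -- `Xstar y` is the (`Q_y`-a.s. unique) maximizer selection of `x ↦ V̂_{xy} + η_x`
    (Xstar : Y → (Option X → ℝ) → Option X)
    (hXstar : ∀ y, ∀ᵐ η ∂(Q y), ∀ x : Option X,
      Vhat V y x + η x ≤ Vhat V y (Xstar y η) + η (Xstar y η)) :
    -Gstar n P μ - Hstar m Q μ =
      ∑ x, n x * ∫ ε, ε (Ystar x ε) ∂(P x) +
      ∑ y, m y * ∫ η, η (Xstar y η) ∂(Q y) := by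
  have hG := neg_Gstar_eq_sum_integral (fun x => (hn x).le) hPac
    (fun x => integrable_apply_of_integrable_sup'_abs (hPint x)) (fun x y => (hμ.1 x y).1) hYstar
  have hH := neg_Gstar_eq_sum_integral (fun y => (hm y).le) hQac
    (fun y => integrable_apply_of_integrable_sup'_abs (hQint y)) (μ := fun b a => μ a b)
    (fun y x => (hμ.1 x y).2) hXstar
  rw [← Hstar_eq_Gstar_swap] at hH
  linarith

/-- Under market clearing, the unobserved part of the social surplus
`−G*(μ) − H*(μ)` equals the sum of the expected error terms of the chosen
alternatives. -/
theorem stmt10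
    (n : X → ℝ) (m : Y → ℝ) (hn : ∀ x, 0 < n x) (hm : ∀ y, 0 < m y)
    (P : X → Measure (Option Y → ℝ)) (Q : Y → Measure (Option X → ℝ))
    [∀ x, IsProbabilityMeasure (P x)] [∀ y, IsProbabilityMeasure (Q y)]
    (hPac : ∀ x, P x ≪ (volume : Measure (Option Y → ℝ)))
    (hPpos : ∀ x, (volume : Measure (Option Y → ℝ)) ≪ P x)
    (hQac : ∀ y, Q y ≪ (volume : Measure (Option X → ℝ)))
    (hQpos : ∀ y, (volume : Measure (Option X → ℝ)) ≪ Q y)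
    (hPint : ∀ x, Integrable (fun ε : Option Y → ℝ =>
      Finset.univ.sup' Finset.univ_nonempty fun a => |ε a|) (P x))
    (hQint : ∀ y, Integrable (fun η : Option X → ℝ =>
      Finset.univ.sup' Finset.univ_nonempty fun a => |η a|) (Q y))
    (U V : X → Y → ℝ) (μ : Option X → Option Y → ℝ)
    (hμ : MarketClearing n m P Q μ U V)
    -- `Ystar x` is the (`P_x`-a.s. unique) maximizer selection of `y ↦ Û_{xy} + ε_y`
    (Ystar : X → (Option Y → ℝ) → Option Y)
    (hYstar : ∀ x, ∀ᵐ ε ∂(P x), ∀ y : Option Y,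
      Uhat U x y + ε y ≤ Uhat U x (Ystar x ε) + ε (Ystar x ε))
    -- `Xstar y` is the (`Q_y`-a.s. unique) maximizer selection of `x ↦ V̂_{xy} + η_x`
    (Xstar : Y → (Option X → ℝ) → Option X)
    (hXstar : ∀ y, ∀ᵐ η ∂(Q y), ∀ x : Option X,
      Vhat V y x + η x ≤ Vhat V y (Xstar y η) + η (Xstar y η)) :
    -Gstar n P μ - Hstar m Q μ =
      ∑ x, n x * ∫ ε, ε (Ystar x ε) ∂(P x) +
      ∑ y, m y * ∫ η, η (Xstar y η) ∂(Q y) :=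
  stmt10_general n m hn hm P Q hPac hQac hPint hQint U V μ hμ Ystar hYstar Xstar hXstar

end
end

section
/- (Weak duality between (P) and (D)) For every feasible matching μ and every (U,V,w̄,w̲) feasible for problem (D), the social welfare satisfies W(μ) ≤ G(U) + H(V) + Σ_{z∈Z} ō_z·w̄_z − Σ_{z∈Z} o̲_z·w̲_z. -/
open MeasureTheory

noncomputable section

variable {X Y Z : Type*} [Fintype X] [Fintype Y] [Fintype Z] [DecidableEq Z]
  [Nonempty X] [Nonempty Y]

namespace Stmt15Aux

variable {X Y Z : Type*} [Fintype X] [Fintype Y] [Fintype Z] [DecidableEq Z]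
  [Nonempty X] [Nonempty Y]

variable {A : Type*} [Fintype A] [Nonempty A]

lemma aux_int (P : Measure (A → ℝ)) [IsProbabilityMeasure P]
    (hP : Integrable (fun ε : A → ℝ => Finset.univ.sup' Finset.univ_nonempty fun b => |ε b|) P)
    (a : A → ℝ) :
    Integrable (fun ε : A → ℝ => Finset.univ.sup' Finset.univ_nonempty fun b => a b + ε b) P := by
  have hmeas : Measurable (fun ε : A → ℝ =>
      Finset.univ.sup' Finset.univ_nonempty fun b => a b + ε b) :=
    by
      have h := Finset.measurable_sup' (f := fun b (ε : A → ℝ) => a b + ε b)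
        Finset.univ_nonempty fun b _ => measurable_const.add (measurable_pi_apply b)
      have heq : (Finset.univ.sup' Finset.univ_nonempty fun b (ε : A → ℝ) => a b + ε b)
          = fun ε => Finset.univ.sup' Finset.univ_nonempty fun b => a b + ε b := by
        funext ε
        rw [Finset.sup'_apply]
      rwa [heq] at h
  refine Integrable.mono'
    (g := fun ε => (Finset.univ.sup' Finset.univ_nonempty fun b => |a b|)
      + Finset.univ.sup' Finset.univ_nonempty fun b => |ε b|)
    ((integrable_const _).add hP) hmeas.aestronglyMeasurable ?_
  filter_upwards with ε
  rw [Real.norm_eq_abs, abs_le]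
  constructor
  · obtain ⟨b0, -, hb0⟩ := Finset.exists_mem_eq_sup' (Finset.univ_nonempty (α := A))
      (fun b => a b + ε b)
    have h1 : |a b0| ≤ Finset.univ.sup' Finset.univ_nonempty fun b => |a b| :=
      Finset.le_sup' (fun b => |a b|) (Finset.mem_univ b0)
    have h2 : |ε b0| ≤ Finset.univ.sup' Finset.univ_nonempty fun b => |ε b| :=
      Finset.le_sup' (fun b => |ε b|) (Finset.mem_univ b0)
    rw [hb0]
    have := abs_le.mp (le_refl |a b0 + ε b0|)
    have := abs_add_le (a b0) (ε b0)
    nlinarith [neg_abs_le (a b0), neg_abs_le (ε b0)]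
  · apply Finset.sup'_le
    intro b _
    have h1 : |a b| ≤ Finset.univ.sup' Finset.univ_nonempty fun b => |a b| :=
      Finset.le_sup' (fun b => |a b|) (Finset.mem_univ b)
    have h2 : |ε b| ≤ Finset.univ.sup' Finset.univ_nonempty fun b => |ε b| :=
      Finset.le_sup' (fun b => |ε b|) (Finset.mem_univ b)
    nlinarith [le_abs_self (a b), le_abs_self (ε b)]

lemma aux_lb (P : Measure (A → ℝ)) [IsProbabilityMeasure P]
    (hP : Integrable (fun ε : A → ℝ => Finset.univ.sup' Finset.univ_nonempty fun b => |ε b|) P)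
    (a : A → ℝ) :
    (Finset.univ.sup' Finset.univ_nonempty a)
      - ∫ ε, (Finset.univ.sup' Finset.univ_nonempty fun b => |ε b|) ∂P
      ≤ ∫ ε, (Finset.univ.sup' Finset.univ_nonempty fun b => a b + ε b) ∂P := by
  have key : ∀ ε : A → ℝ,
      (Finset.univ.sup' Finset.univ_nonempty a)
        - (Finset.univ.sup' Finset.univ_nonempty fun b => |ε b|)
      ≤ Finset.univ.sup' Finset.univ_nonempty fun b => a b + ε b := by
    intro ε
    obtain ⟨b0, -, hb0⟩ := Finset.exists_mem_eq_sup' (Finset.univ_nonempty (α := A)) a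
    have h1 : a b0 + ε b0 ≤ Finset.univ.sup' Finset.univ_nonempty fun b => a b + ε b :=
      Finset.le_sup' (fun b => a b + ε b) (Finset.mem_univ b0)
    have h2 : |ε b0| ≤ Finset.univ.sup' Finset.univ_nonempty fun b => |ε b| :=
      Finset.le_sup' (fun b => |ε b|) (Finset.mem_univ b0)
    have h3 := neg_abs_le (ε b0)
    rw [hb0]
    linarith
  calc (Finset.univ.sup' Finset.univ_nonempty a)
      - ∫ ε, (Finset.univ.sup' Finset.univ_nonempty fun b => |ε b|) ∂P
      = ∫ ε, ((Finset.univ.sup' Finset.univ_nonempty a)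
        - Finset.univ.sup' Finset.univ_nonempty fun b => |ε b|) ∂P := by
        rw [integral_sub (integrable_const _) hP, integral_const]
        simp
    _ ≤ _ := integral_mono ((integrable_const _).sub hP) (aux_int P hP a) key

lemma aux_sum {B : Type*} [Fintype B] (ρ : Option B → ℝ) (hρ : ∀ o, 0 ≤ ρ o)
    (a : Option B → ℝ) (ha0 : a none = 0) :
    ∑ b : B, ρ (some b) * a (some b)
      ≤ (∑ o, ρ o) * Finset.univ.sup' Finset.univ_nonempty a := by
  have h : ∑ b : B, ρ (some b) * a (some b) = ∑ o : Option B, ρ o * a o := by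
    rw [Fintype.sum_option, ha0]; ring
  rw [h, Finset.sum_mul]
  refine Finset.sum_le_sum fun o _ => ?_
  exact mul_le_mul_of_nonneg_left (Finset.le_sup' a (Finset.mem_univ o)) (hρ o)

lemma region_sum (zm : Y → Z) (μ : Option X → Option Y → ℝ) (w : Z → ℝ) :
    ∑ z, regionMass zm μ z * w z
      = ∑ x : X, ∑ y : Y, μ (some x) (some y) * w (zm y) := by
  unfold regionMass
  simp only [Finset.sum_mul, ite_mul, zero_mul]
  rw [Finset.sum_comm]
  refine Finset.sum_congr rfl fun x _ => ?_
  rw [Finset.sum_comm]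
  refine Finset.sum_congr rfl fun y _ => ?_
  rw [Finset.sum_ite_eq Finset.univ (zm y) (fun z => μ (some x) (some y) * w z)]
  simp

lemma G_bound (n : X → ℝ) (hn : ∀ x, 0 ≤ n x) (P : X → Measure (Option Y → ℝ))
    [∀ x, IsProbabilityMeasure (P x)]
    (hPint : ∀ x, Integrable (fun ε : Option Y → ℝ =>
      Finset.univ.sup' Finset.univ_nonempty fun a => |ε a|) (P x))
    (μ : Option X → Option Y → ℝ) (hpos : ∀ x o, 0 ≤ μ (some x) o)
    (hpop : ∀ x, ∑ o : Option Y, μ (some x) o = n x) (U' : X → Y → ℝ) :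
    ∑ x, ∑ y, μ (some x) (some y) * U' x y - Gfun n P U'
      ≤ ∑ x, n x * ∫ ε, (Finset.univ.sup' Finset.univ_nonempty fun a => |ε a|) ∂(P x) := by
  rw [Gfun, ← Finset.sum_sub_distrib]
  refine Finset.sum_le_sum fun x _ => ?_
  have h1 : ∑ y, μ (some x) (some y) * U' x y
      ≤ n x * Finset.univ.sup' Finset.univ_nonempty (Uhat U' x) := by
    have h := aux_sum (μ (some x)) (hpos x) (Uhat U' x) rfl
    rwa [hpop x] at h
  have h2 := aux_lb (P x) (hPint x) (Uhat U' x)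
  have h3 := mul_le_mul_of_nonneg_left h2 (hn x)
  rw [mul_sub] at h3
  linarith

lemma H_bound (m : Y → ℝ) (hm : ∀ y, 0 ≤ m y) (Q : Y → Measure (Option X → ℝ))
    [∀ y, IsProbabilityMeasure (Q y)]
    (hQint : ∀ y, Integrable (fun η : Option X → ℝ =>
      Finset.univ.sup' Finset.univ_nonempty fun a => |η a|) (Q y))
    (μ : Option X → Option Y → ℝ) (hpos : ∀ o y, 0 ≤ μ o (some y))
    (hpop : ∀ y, ∑ o : Option X, μ o (some y) = m y) (V' : X → Y → ℝ) :
    ∑ x, ∑ y, μ (some x) (some y) * V' x y - Hfun m Q V'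
      ≤ ∑ y, m y * ∫ η, (Finset.univ.sup' Finset.univ_nonempty fun a => |η a|) ∂(Q y) := by
  rw [Hfun, Finset.sum_comm, ← Finset.sum_sub_distrib]
  refine Finset.sum_le_sum fun y _ => ?_
  have h1 : ∑ x, μ (some x) (some y) * V' x y
      ≤ m y * Finset.univ.sup' Finset.univ_nonempty (Vhat V' y) := by
    have h := aux_sum (fun o => μ o (some y)) (fun o => hpos o y) (Vhat V' y) rfl
    rwa [hpop y] at h
  have h2 := aux_lb (Q y) (hQint y) (Vhat V' y)
  have h3 := mul_le_mul_of_nonneg_left h2 (hm y)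
  rw [mul_sub] at h3
  linarith

end Stmt15Aux

/-- Weak duality between (P) and (D). For every feasible matching `μ`
and every point `(U,V,w̄,w̲)` feasible for problem (D), the social welfare `W(μ)` is at
most the (D)-objective value. -/
theorem stmt15
    (n : X → ℝ) (m : Y → ℝ) (hn : ∀ x, 0 < n x) (hm : ∀ y, 0 < m y)
    (P : X → Measure (Option Y → ℝ)) (Q : Y → Measure (Option X → ℝ))
    [∀ x, IsProbabilityMeasure (P x)] [∀ y, IsProbabilityMeasure (Q y)]
    (hPint : ∀ x, Integrable (fun ε : Option Y → ℝ =>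
      Finset.univ.sup' Finset.univ_nonempty fun a => |ε a|) (P x))
    (hQint : ∀ y, Integrable (fun η : Option X → ℝ =>
      Finset.univ.sup' Finset.univ_nonempty fun a => |η a|) (Q y))
    (Φ : X → Y → ℝ) (zm : Y → Z) (ol ou : Z → ℝ)
    (hol : ∀ z, 0 ≤ ol z) (hou : ∀ z, ol z ≤ ou z)
    (μ : Option X → Option Y → ℝ) (hμ : FeasMatch n m zm ol ou μ)
    (U V : X → Y → ℝ) (wb wl : Z → ℝ) (hfeas : FeasD Φ zm U V wb wl) :
    SW n m P Q Φ μ ≤ objD n m P Q ol ou U V wb wl := by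
  obtain ⟨hpos, hposn, hposy, ⟨hpopx, hpopy⟩, hreg⟩ := hμ
  obtain ⟨hwb, hwl, hUV⟩ := hfeas
  have hposO : ∀ x (o : Option Y), 0 ≤ μ (some x) o := by
    intro x o; cases o with
    | none => exact hposn x
    | some y => exact hpos x y
  have hposO' : ∀ (o : Option X) y, 0 ≤ μ o (some y) := by
    intro o y; cases o with
    | none => exact hposy y
    | some x => exact hpos x y
  have hbddG : BddAbove (Set.range fun U' : X → Y → ℝ =>
      ∑ x, ∑ y, μ (some x) (some y) * U' x y - Gfun n P U') := by
    refine ⟨∑ x, n x * ∫ ε, (Finset.univ.sup' Finset.univ_nonempty fun a => |ε a|) ∂(P x), ?_⟩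
    rintro _ ⟨U', rfl⟩
    exact Stmt15Aux.G_bound n (fun x => (hn x).le) P hPint μ hposO hpopx U'
  have hbddH : BddAbove (Set.range fun V' : X → Y → ℝ =>
      ∑ x, ∑ y, μ (some x) (some y) * V' x y - Hfun m Q V') := by
    refine ⟨∑ y, m y * ∫ η, (Finset.univ.sup' Finset.univ_nonempty fun a => |η a|) ∂(Q y), ?_⟩
    rintro _ ⟨V', rfl⟩
    exact Stmt15Aux.H_bound m (fun y => (hm y).le) Q hQint μ hposO' hpopy V'
  have hG : ∑ x, ∑ y, μ (some x) (some y) * U x y - Gfun n P U ≤ Gstar n P μ :=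
    le_ciSup hbddG U
  have hH : ∑ x, ∑ y, μ (some x) (some y) * V x y - Hfun m Q V ≤ Hstar m Q μ :=
    le_ciSup hbddH V
  have hΦ : ∑ x, ∑ y, μ (some x) (some y) * Φ x y
      ≤ ∑ x, ∑ y, μ (some x) (some y) * (U x y + V x y + wb (zm y) - wl (zm y)) := by
    refine Finset.sum_le_sum fun x _ => Finset.sum_le_sum fun y _ => ?_
    refine mul_le_mul_of_nonneg_left ?_ (hpos x y)
    have := hUV x y
    linarith
  have hsplit : ∑ x, ∑ y, μ (some x) (some y) * (U x y + V x y + wb (zm y) - wl (zm y))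
      = (∑ x, ∑ y, μ (some x) (some y) * U x y)
        + (∑ x, ∑ y, μ (some x) (some y) * V x y)
        + (∑ z, regionMass zm μ z * wb z) - ∑ z, regionMass zm μ z * wl z := by
    rw [Stmt15Aux.region_sum zm μ wb, Stmt15Aux.region_sum zm μ wl]
    rw [← Finset.sum_add_distrib, ← Finset.sum_add_distrib, ← Finset.sum_sub_distrib]
    refine Finset.sum_congr rfl fun x _ => ?_
    rw [← Finset.sum_add_distrib, ← Finset.sum_add_distrib, ← Finset.sum_sub_distrib]
    refine Finset.sum_congr rfl fun y _ => ?_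
    ring
  have hzb : ∑ z, regionMass zm μ z * wb z ≤ ∑ z, ou z * wb z :=
    Finset.sum_le_sum fun z _ => mul_le_mul_of_nonneg_right (hreg z).2 (hwb z)
  have hzl : ∑ z, ol z * wl z ≤ ∑ z, regionMass zm μ z * wl z :=
    Finset.sum_le_sum fun z _ => mul_le_mul_of_nonneg_right (hreg z).1 (hwl z)
  rw [SW, objD]
  linarith

end
end

section
/- (Existence and uniqueness for problem (D')) For every tax vector w : Z → ℝ, the optimization problem (D'): minimize G(U) + H(V) over U, V ∈ ℝ^{X×Y} subject to U_{xy} + V_{xy} ≥ Φ_{xy} − w_{z(y)} for all (x,y) ∈ X×Y, has an optimal solution, and this optimal solution is unique. -/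
open MeasureTheory

noncomputable section

variable {X Y Z : Type*} [Fintype X] [Fintype Y] [Fintype Z] [DecidableEq Z]
  [Nonempty X] [Nonempty Y]

/-!
The objective `G(U) + H(V)` is continuous, strictly convex and coercive on the closed convex
feasible set, so it has exactly one minimiser there.

Each summand of `G` is an expected maximum `c ↦ E max_a (c_a + ε_a)` evaluated at `c = Û_x`,
whose outside-option entry is `0`. Such an expected maximum is convex; it is strictly convex on
`{c | c_{y₀} = 0}` because for two distinct such `c, c'` the noises `ε` for which `c + ε` and
`c' + ε` attain their maximum at different alternatives form a nonempty open set, which the noise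
distribution charges since Lebesgue measure is absolutely continuous with respect to it; there
Jensen's inequality for `max` is strict. Coercivity: comparing the maximum with the outside
option and with alternative `y` gives `n_x max(U_{xy}, 0) ≤ G(U) + const`, so a sublevel set
bounds `U` and `V` from above, and the constraint `U + V ≥ Φ - w` then bounds them from below.
-/

lemma smul_add_smul_add_of_add_eq_one {R E : Type*} [Semiring R] [AddCommMonoid E] [Module R E]
    {a b : R} (hab : a + b = 1) (x y z : E) : a • x + b • y + z = a • (x + z) + b • (y + z) := by
  rw [smul_add, smul_add, add_add_add_comm, ← add_smul, hab, one_smul]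

section FiniteMax

variable {κ : Type*} [Fintype κ] [Nonempty κ]

lemma sup'_univ_abs_eq_norm (v : κ → ℝ) :
    Finset.univ.sup' Finset.univ_nonempty (fun a => |v a|) = ‖v‖ := by
  have hle (a : κ) : |v a| ≤ Finset.univ.sup' Finset.univ_nonempty (fun a => |v a|) :=
    Finset.le_sup' (fun a => |v a|) (Finset.mem_univ a)
  refine le_antisymm (Finset.sup'_le _ _ fun a _ => norm_le_pi_norm v a) ?_
  exact (pi_norm_le_iff_of_nonneg ((abs_nonneg _).trans (hle (Classical.arbitrary κ)))).2 hle

lemma sup'_univ_le_add_norm_sub (u v : κ → ℝ) :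
    Finset.univ.sup' Finset.univ_nonempty u ≤ Finset.univ.sup' Finset.univ_nonempty v + ‖u - v‖ :=
  Finset.sup'_le _ _ fun a _ => by
    have h₁ := Finset.le_sup' v (Finset.mem_univ a)
    have h₂ : u a - v a ≤ ‖u - v‖ := (le_abs_self _).trans (norm_le_pi_norm (u - v) a)
    linarith

lemma lipschitzWith_sup'_univ :
    LipschitzWith 1 fun v : κ → ℝ => Finset.univ.sup' Finset.univ_nonempty v :=
  LipschitzWith.of_le_add fun u v => by
    simpa only [dist_eq_norm] using sup'_univ_le_add_norm_sub u v

lemma abs_sup'_univ_le_norm (v : κ → ℝ) : |Finset.univ.sup' Finset.univ_nonempty v| ≤ ‖v‖ := by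
  simpa [dist_eq_norm] using lipschitzWith_sup'_univ.dist_le_mul v 0

lemma sup'_univ_smul_add_smul_le {a b : ℝ} (ha : 0 ≤ a) (hb : 0 ≤ b) (u v : κ → ℝ) :
    Finset.univ.sup' Finset.univ_nonempty (a • u + b • v) ≤
      a * Finset.univ.sup' Finset.univ_nonempty u + b * Finset.univ.sup' Finset.univ_nonempty v :=
  Finset.sup'_le _ _ fun i _ => by
    simp only [Pi.add_apply, Pi.smul_apply, smul_eq_mul]
    gcongr <;> exact Finset.le_sup' _ (Finset.mem_univ i)

lemma sup'_univ_smul_add_smul_lt {a b : ℝ} (ha : 0 < a) (hb : 0 < b) {u v : κ → ℝ} {i j : κ}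
    (hij : i ≠ j) (hu : ∀ k ≠ i, u k < u i) (hv : ∀ k ≠ j, v k < v j) :
    Finset.univ.sup' Finset.univ_nonempty (a • u + b • v) <
      a * Finset.univ.sup' Finset.univ_nonempty u +
        b * Finset.univ.sup' Finset.univ_nonempty v := by
  obtain ⟨k, -, hk⟩ := Finset.exists_mem_eq_sup' Finset.univ_nonempty (a • u + b • v)
  have hui := Finset.le_sup' u (Finset.mem_univ i)
  have hvj := Finset.le_sup' v (Finset.mem_univ j)
  have huk := Finset.le_sup' u (Finset.mem_univ k)
  have hvk := Finset.le_sup' v (Finset.mem_univ k)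
  rw [hk]
  simp only [Pi.add_apply, Pi.smul_apply, smul_eq_mul]
  rcases eq_or_ne k i with rfl | hki
  · nlinarith [hv k hij]
  · nlinarith [hu k hki]

def jensenGap (a b : ℝ) (c c' ε : κ → ℝ) : ℝ :=
  a * Finset.univ.sup' Finset.univ_nonempty (c + ε) +
    b * Finset.univ.sup' Finset.univ_nonempty (c' + ε) -
    Finset.univ.sup' Finset.univ_nonempty (a • c + b • c' + ε)

lemma jensenGap_nonneg {a b : ℝ} (ha : 0 ≤ a) (hb : 0 ≤ b) (hab : a + b = 1) (c c' ε : κ → ℝ) :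
    0 ≤ jensenGap a b c c' ε := by
  rw [jensenGap, smul_add_smul_add_of_add_eq_one hab, sub_nonneg]
  exact sup'_univ_smul_add_smul_le ha hb _ _

lemma jensenGap_pos {a b : ℝ} (ha : 0 < a) (hb : 0 < b) (hab : a + b = 1) {c c' ε : κ → ℝ}
    {i j : κ} (hij : i ≠ j) (hc : ∀ k ≠ i, c k + ε k < c i + ε i)
    (hc' : ∀ k ≠ j, c' k + ε k < c' j + ε j) : 0 < jensenGap a b c c' ε := by
  rw [jensenGap, smul_add_smul_add_of_add_eq_one hab, sub_pos]
  exact sup'_univ_smul_add_smul_lt ha hb hij hc hc'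

end FiniteMax

section StrictMaximisers

variable {κ : Type*}

lemma isOpen_setOf_forall_ne_add_lt [Finite κ] (c : κ → ℝ) (i : κ) :
    IsOpen {ε : κ → ℝ | ∀ k ≠ i, c k + ε k < c i + ε i} := by
  simp only [Set.ofPred_forall]
  exact isOpen_iInter_of_finite fun k => isOpen_iInter_of_finite fun _ =>
    isOpen_lt (continuous_const.add (continuous_apply k))
      (continuous_const.add (continuous_apply i))

lemma exists_forall_ne_add_lt_and_forall_ne_add_lt {c c' : κ → ℝ} {i j : κ}
    (h : c j - c i < c' j - c' i) :
    ∃ ε : κ → ℝ, (∀ k ≠ i, c k + ε k < c i + ε i) ∧ ∀ k ≠ j, c' k + ε k < c' j + ε j := by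
  classical
  have hij : j ≠ i := by rintro rfl; simp at h
  obtain ⟨t, ht₁, ht₂⟩ := exists_between (show c' i - c' j < c i - c j by linarith)
  refine ⟨fun k => if k = i then 0 else if k = j then t else
    -(|c k| + |c' k| + |c i| + |c' j + t| + 1), fun k hk => ?_, fun k hk => ?_⟩
  · by_cases hkj : k = j
    · subst hkj; simp only [hk, ↓reduceIte]; linarith
    · simp only [hk, hkj, ↓reduceIte]
      linarith [le_abs_self (c k), abs_nonneg (c' k), neg_abs_le (c i), abs_nonneg (c' j + t)]
  · by_cases hki : k = i
    · subst hki; simp only [hij, ↓reduceIte]; linarith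
    · simp only [hk, hki, hij, ↓reduceIte]
      linarith [le_abs_self (c' k), abs_nonneg (c k), abs_nonneg (c i), neg_abs_le (c' j + t)]

end StrictMaximisers

section ExpMax

variable {κ : Type*} [Fintype κ] [Nonempty κ] {μ : Measure (κ → ℝ)}

def expMax (μ : Measure (κ → ℝ)) (c : κ → ℝ) : ℝ :=
  ∫ ε, Finset.univ.sup' Finset.univ_nonempty (c + ε) ∂μ

lemma integrable_sup'_univ_add [IsFiniteMeasure μ] (hμ : Integrable (fun ε => ‖ε‖) μ)
    (c : κ → ℝ) : Integrable (fun ε => Finset.univ.sup' Finset.univ_nonempty (c + ε)) μ :=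
  ((integrable_const ‖c‖).add hμ).mono'
    (lipschitzWith_sup'_univ.continuous.comp (continuous_const_add c)).aestronglyMeasurable
    (Filter.Eventually.of_forall fun ε => (abs_sup'_univ_le_norm _).trans (norm_add_le c ε))

lemma lipschitzWith_expMax [IsProbabilityMeasure μ] (hμ : Integrable (fun ε => ‖ε‖) μ) :
    LipschitzWith 1 (expMax μ) := by
  refine LipschitzWith.of_le_add fun c c' => ?_
  calc expMax μ c ≤ ∫ ε, (Finset.univ.sup' Finset.univ_nonempty (c' + ε) + dist c c') ∂μ := by
        refine integral_mono (integrable_sup'_univ_add hμ c)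
          ((integrable_sup'_univ_add hμ c').add (integrable_const _)) fun ε => ?_
        simpa [dist_eq_norm] using sup'_univ_le_add_norm_sub (c + ε) (c' + ε)
    _ = expMax μ c' + dist c c' := by
        rw [integral_add (integrable_sup'_univ_add hμ c') (integrable_const _), integral_const,
          probReal_univ, one_smul, expMax]

lemma sub_integral_norm_le_expMax [IsProbabilityMeasure μ] (hμ : Integrable (fun ε => ‖ε‖) μ)
    (c : κ → ℝ) (i : κ) : c i - ∫ ε, ‖ε‖ ∂μ ≤ expMax μ c := by
  calc c i - ∫ ε, ‖ε‖ ∂μ = ∫ ε, (c i - ‖ε‖) ∂μ := by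
        rw [integral_sub (integrable_const _) hμ, integral_const, probReal_univ, one_smul]
    _ ≤ expMax μ c := integral_mono ((integrable_const _).sub hμ)
        (integrable_sup'_univ_add hμ c) fun ε => by
          have h₁ := Finset.le_sup' (c + ε) (Finset.mem_univ i)
          have h₂ := neg_le_of_abs_le (norm_le_pi_norm ε i)
          simp only [Pi.add_apply] at h₁
          linarith

lemma integrable_jensenGap [IsFiniteMeasure μ] (hμ : Integrable (fun ε => ‖ε‖) μ) (a b : ℝ)
    (c c' : κ → ℝ) : Integrable (jensenGap a b c c') μ :=
  (((integrable_sup'_univ_add hμ c).const_mul a).fun_add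
    ((integrable_sup'_univ_add hμ c').const_mul b)).sub (integrable_sup'_univ_add hμ _)

lemma integral_jensenGap [IsFiniteMeasure μ] (hμ : Integrable (fun ε => ‖ε‖) μ) (a b : ℝ)
    (c c' : κ → ℝ) : ∫ ε, jensenGap a b c c' ε ∂μ =
      a * expMax μ c + b * expMax μ c' - expMax μ (a • c + b • c') := by
  have h₁ := (integrable_sup'_univ_add hμ c).const_mul a
  have h₂ := (integrable_sup'_univ_add hμ c').const_mul b
  have h₁₂ := h₁.fun_add h₂
  unfold jensenGap
  rw [integral_sub h₁₂ (integrable_sup'_univ_add hμ _), integral_add h₁ h₂,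
    integral_const_mul, integral_const_mul, expMax, expMax, expMax]

lemma expMax_smul_add_smul_lt [IsFiniteMeasure μ] (hμ : Integrable (fun ε => ‖ε‖) μ)
    (hvol : (volume : Measure (κ → ℝ)) ≪ μ) {c c' : κ → ℝ} {i j : κ}
    (h : c j - c i < c' j - c' i) {a b : ℝ} (ha : 0 < a) (hb : 0 < b) (hab : a + b = 1) :
    expMax μ (a • c + b • c') < a * expMax μ c + b * expMax μ c' := by
  have hij : i ≠ j := by rintro rfl; simp at h
  set O := {ε : κ → ℝ | ∀ k ≠ i, c k + ε k < c i + ε i} ∩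
    {ε : κ → ℝ | ∀ k ≠ j, c' k + ε k < c' j + ε j}
  have hO_open : IsOpen O :=
    (isOpen_setOf_forall_ne_add_lt c i).inter (isOpen_setOf_forall_ne_add_lt c' j)
  have hO_pos : μ O ≠ 0 := fun h₀ =>
    hO_open.measure_ne_zero volume (exists_forall_ne_add_lt_and_forall_ne_add_lt h) (hvol h₀)
  have hO_sub : O ⊆ Function.support (jensenGap a b c c') := fun ε hε =>
    (jensenGap_pos ha hb hab hij hε.1 hε.2).ne'
  have hpos := (integral_pos_iff_support_of_nonneg (jensenGap_nonneg ha.le hb.le hab c c')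
    (integrable_jensenGap hμ a b c c')).2
      (pos_iff_ne_zero.2 fun h₀ => hO_pos (measure_mono_null hO_sub h₀))
  linarith [integral_jensenGap hμ a b c c' (μ := μ)]

lemma strictConvexOn_expMax [IsFiniteMeasure μ] (hμ : Integrable (fun ε => ‖ε‖) μ)
    (hvol : (volume : Measure (κ → ℝ)) ≪ μ) (i : κ) :
    StrictConvexOn ℝ {c | c i = 0} (expMax μ) := by
  refine ⟨fun c hc c' hc' a b _ _ _ => by simp_all, fun c hc c' hc' hne a b ha hb hab => ?_⟩
  obtain ⟨j, hj⟩ := Function.ne_iff.1 hne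
  simp only [Set.mem_ofPred_eq] at hc hc'
  simp only [smul_eq_mul]
  rcases hj.lt_or_gt with hlt | hlt
  · exact expMax_smul_add_smul_lt hμ hvol (i := i) (j := j) (by linarith) ha hb hab
  · rw [add_comm (a • c), add_comm (a * _)]
    exact expMax_smul_add_smul_lt hμ hvol (i := i) (j := j) (by linarith) hb ha
      (by rw [add_comm, hab])

end ExpMax

lemma StrictConvexOn.fst_add_snd {E F : Type*} [AddCommGroup E] [Module ℝ E] [AddCommGroup F]
    [Module ℝ F] {s : Set E} {t : Set F} {f : E → ℝ} {g : F → ℝ} (hf : StrictConvexOn ℝ s f)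
    (hg : StrictConvexOn ℝ t g) : StrictConvexOn ℝ (s ×ˢ t) fun p => f p.1 + g p.2 := by
  refine ⟨hf.1.prod hg.1, fun p hp q hq hpq a b ha hb hab => ?_⟩
  simp only [Prod.fst_add, Prod.smul_fst, Prod.snd_add, Prod.smul_snd, smul_add]
  by_cases h₁ : p.1 = q.1
  · have h₂ : p.2 ≠ q.2 := fun h₂ => hpq (Prod.ext h₁ h₂)
    linarith [hf.convexOn.2 hp.1 hq.1 ha.le hb.le hab, hg.2 hp.2 hq.2 h₂ ha hb hab]
  · linarith [hf.2 hp.1 hq.1 h₁ ha hb hab, hg.convexOn.2 hp.2 hq.2 ha.le hb.le hab]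

section Welfare

variable {ι κ : Type*}

lemma Uhat_smul_add_smul (a b : ℝ) (U U' : ι → κ → ℝ) (x : ι) :
    Uhat (a • U + b • U') x = a • Uhat U x + b • Uhat U' x := by
  ext o; cases o <;> simp [Uhat]

lemma continuous_Uhat (x : ι) : Continuous fun U : ι → κ → ℝ => Uhat U x :=
  continuous_pi fun o => by cases o <;> simp only [Uhat, Option.elim] <;> fun_prop

variable [Fintype ι] [Fintype κ] [Nonempty κ] {n : ι → ℝ} {P : ι → Measure (Option κ → ℝ)}

lemma Gfun_eq_sum_expMax (U : ι → κ → ℝ) : Gfun n P U = ∑ x, n x * expMax (P x) (Uhat U x) :=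
  rfl

lemma strictConvexOn_Gfun [∀ x, IsFiniteMeasure (P x)] (hn : ∀ x, 0 < n x)
    (hP : ∀ x, Integrable (fun ε => ‖ε‖) (P x))
    (hvol : ∀ x, (volume : Measure (Option κ → ℝ)) ≪ P x) :
    StrictConvexOn ℝ Set.univ (Gfun n P) := by
  refine ⟨convex_univ, fun U _ U' _ hne a b ha hb hab => ?_⟩
  have hconv (x : ι) := strictConvexOn_expMax (hP x) (hvol x) none
  have hmem (U : ι → κ → ℝ) (x : ι) : Uhat U x ∈ {c : Option κ → ℝ | c none = 0} := rfl
  obtain ⟨x₀, hx₀⟩ : ∃ x, Uhat U x ≠ Uhat U' x := by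
    by_contra! h
    exact hne (funext₂ fun x y => congr_fun (h x) (some y))
  simp only [Gfun_eq_sum_expMax, Uhat_smul_add_smul, smul_eq_mul, Finset.mul_sum,
    ← Finset.sum_add_distrib]
  refine Finset.sum_lt_sum (fun x _ => ?_) ⟨x₀, Finset.mem_univ _, ?_⟩
  · have := (hconv x).convexOn.2 (hmem U x) (hmem U' x) ha.le hb.le hab
    simp only [smul_eq_mul] at this
    nlinarith [hn x]
  · have := (hconv x₀).2 (hmem U x₀) (hmem U' x₀) hx₀ ha hb hab
    simp only [smul_eq_mul] at this
    nlinarith [hn x₀]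

variable [∀ x, IsProbabilityMeasure (P x)]

lemma continuous_Gfun (hP : ∀ x, Integrable (fun ε => ‖ε‖) (P x)) : Continuous (Gfun n P) :=
  continuous_finsetSum _ fun x _ =>
    continuous_const.mul ((lipschitzWith_expMax (hP x)).continuous.comp (continuous_Uhat x))

lemma mul_max_le_Gfun_add (hn : ∀ x, 0 ≤ n x) (hP : ∀ x, Integrable (fun ε => ‖ε‖) (P x))
    (U : ι → κ → ℝ) (x : ι) (y : κ) :
    n x * max (U x y) 0 ≤ Gfun n P U + ∑ x, n x * ∫ ε, ‖ε‖ ∂(P x) := by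
  have key : ∀ x o, n x * Uhat U x o ≤ n x * (expMax (P x) (Uhat U x) + ∫ ε, ‖ε‖ ∂(P x)) :=
    fun x o => mul_le_mul_of_nonneg_left
      (by linarith [sub_integral_norm_le_expMax (hP x) (Uhat U x) o]) (hn x)
  calc n x * max (U x y) 0
      ≤ n x * (expMax (P x) (Uhat U x) + ∫ ε, ‖ε‖ ∂(P x)) := by
        rcases le_total (U x y) 0 with h | h
        · simpa [max_eq_right h, Uhat] using key x none
        · simpa [max_eq_left h, Uhat] using key x (some y)
    _ ≤ ∑ x, n x * (expMax (P x) (Uhat U x) + ∫ ε, ‖ε‖ ∂(P x)) :=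
        Finset.single_le_sum (fun x _ => by simpa [Uhat] using key x none) (Finset.mem_univ x)
    _ = Gfun n P U + ∑ x, n x * ∫ ε, ‖ε‖ ∂(P x) := by
        simp only [Gfun_eq_sum_expMax, mul_add, Finset.sum_add_distrib]

end Welfare

section DualProblem

variable {ι κ : Type*}

def dualFeasibleSet (b : ι → κ → ℝ) : Set ((ι → κ → ℝ) × (ι → κ → ℝ)) :=
  {p | ∀ x y, p.1 x y + p.2 x y ≥ b x y}

lemma isClosed_dualFeasibleSet (b : ι → κ → ℝ) : IsClosed (dualFeasibleSet b) := by
  simp only [dualFeasibleSet, Set.ofPred_forall]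
  exact isClosed_iInter fun x => isClosed_iInter fun y =>
    isClosed_le continuous_const (by fun_prop)

lemma convex_dualFeasibleSet (b : ι → κ → ℝ) : Convex ℝ (dualFeasibleSet b) := by
  intro p hp q hq a c ha hc hac x y
  have h : a * (p.1 x y + p.2 x y) + c * (q.1 x y + q.2 x y) ≥ (a + c) * b x y := by
    nlinarith [mul_le_mul_of_nonneg_left (hp x y) ha, mul_le_mul_of_nonneg_left (hq x y) hc]
  simp only [Prod.fst_add, Prod.smul_fst, Prod.snd_add, Prod.smul_snd, Pi.add_apply,
    Pi.smul_apply, smul_eq_mul]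
  linarith [hac ▸ h]

variable [Fintype ι] [Fintype κ] [Nonempty ι] [Nonempty κ] {n : ι → ℝ} {m : κ → ℝ}
  {P : ι → Measure (Option κ → ℝ)} {Q : κ → Measure (Option ι → ℝ)}

lemma strictConvexOn_Gfun_add_Hfun [∀ x, IsFiniteMeasure (P x)] [∀ y, IsFiniteMeasure (Q y)]
    (hn : ∀ x, 0 < n x) (hm : ∀ y, 0 < m y)
    (hP : ∀ x, Integrable (fun ε => ‖ε‖) (P x)) (hQ : ∀ y, Integrable (fun η => ‖η‖) (Q y))
    (hPvol : ∀ x, (volume : Measure (Option κ → ℝ)) ≪ P x)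
    (hQvol : ∀ y, (volume : Measure (Option ι → ℝ)) ≪ Q y) :
    StrictConvexOn ℝ Set.univ
      fun p : (ι → κ → ℝ) × (ι → κ → ℝ) => Gfun n P p.1 + Hfun m Q p.2 := by
  -- `Hfun m Q` is definitionally `Gfun m Q ∘ Function.swap`.
  have hH : StrictConvexOn ℝ Set.univ (Hfun m Q) :=
    ⟨convex_univ, fun V _ V' _ hne a b ha hb hab =>
      (strictConvexOn_Gfun hm hQ hQvol).2 trivial trivial
        (fun h => hne (funext₂ fun x y => congr_fun₂ h y x)) ha hb hab⟩
  simpa only [Set.univ_prod_univ] using (strictConvexOn_Gfun hn hP hPvol).fst_add_snd hH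

lemma exists_isMinOn_Gfun_add_Hfun [∀ x, IsProbabilityMeasure (P x)]
    [∀ y, IsProbabilityMeasure (Q y)] (hn : ∀ x, 0 < n x) (hm : ∀ y, 0 < m y)
    (hP : ∀ x, Integrable (fun ε => ‖ε‖) (P x)) (hQ : ∀ y, Integrable (fun η => ‖η‖) (Q y))
    (b : ι → κ → ℝ) :
    ∃ p ∈ dualFeasibleSet b,
      IsMinOn (fun p => Gfun n P p.1 + Hfun m Q p.2) (dualFeasibleSet b) p := by
  set F := fun p : (ι → κ → ℝ) × (ι → κ → ℝ) => Gfun n P p.1 + Hfun m Q p.2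
  set p₀ : (ι → κ → ℝ) × (ι → κ → ℝ) := (0, b)
  have hp₀ : p₀ ∈ dualFeasibleSet b := fun x y => by simp [p₀]
  set C := F p₀ + ∑ x, n x * ∫ ε, ‖ε‖ ∂(P x) + ∑ y, m y * ∫ η, ‖η‖ ∂(Q y)
  have hbound : ∀ p ∈ dualFeasibleSet b, F p ≤ F p₀ →
      p ∈ Set.Icc ((fun x y => b x y - C / m y), (fun x y => b x y - C / n x))
        ((fun x _ => C / n x), (fun _ y => C / m y)) := by
    intro p hp hle
    have hU x y := mul_max_le_Gfun_add (fun x => (hn x).le) hP p.1 x y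
    have hV x y : m y * max (p.2 x y) 0 ≤ Hfun m Q p.2 + ∑ y, m y * ∫ η, ‖η‖ ∂(Q y) :=
      mul_max_le_Gfun_add (fun y => (hm y).le) hQ (Function.swap p.2) y x
    have hU' x y : p.1 x y ≤ C / n x := by
      rw [le_div_iff₀' (hn x)]
      nlinarith [le_max_left (p.1 x y) 0, hU x y, hV x y,
        mul_nonneg (hm y).le (le_max_right (p.2 x y) 0), hn x]
    have hV' x y : p.2 x y ≤ C / m y := by
      rw [le_div_iff₀' (hm y)]
      nlinarith [le_max_left (p.2 x y) 0, hU x y, hV x y,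
        mul_nonneg (hn x).le (le_max_right (p.1 x y) 0), hm y]
    exact ⟨⟨fun x y => by linarith [hp x y, hV' x y], fun x y => by linarith [hp x y, hU' x y]⟩,
      ⟨hU', hV'⟩⟩
  have hF : Continuous F := ((continuous_Gfun hP).comp continuous_fst).add
    ((continuous_Gfun hQ).comp
      (by fun_prop : Continuous fun p : (ι → κ → ℝ) × (ι → κ → ℝ) => Function.swap p.2))
  refine hF.continuousOn.exists_isMinOn' (isClosed_dualFeasibleSet b) hp₀ ?_
  refine Filter.mem_inf_of_inter isCompact_Icc.compl_mem_cocompact (Filter.mem_principal_self _)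
    fun p ⟨hpK, hp⟩ => le_of_not_ge fun hlt => hpK (hbound p hp hlt)

end DualProblem

theorem stmt17_general
    (n : X → ℝ) (m : Y → ℝ) (hn : ∀ x, 0 < n x) (hm : ∀ y, 0 < m y)
    (P : X → Measure (Option Y → ℝ)) (Q : Y → Measure (Option X → ℝ))
    [∀ x, IsProbabilityMeasure (P x)] [∀ y, IsProbabilityMeasure (Q y)]
    (hPpos : ∀ x, (volume : Measure (Option Y → ℝ)) ≪ P x)
    (hQpos : ∀ y, (volume : Measure (Option X → ℝ)) ≪ Q y)
    (hPint : ∀ x, Integrable (fun ε : Option Y → ℝ =>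
      Finset.univ.sup' Finset.univ_nonempty fun a => |ε a|) (P x))
    (hQint : ∀ y, Integrable (fun η : Option X → ℝ =>
      Finset.univ.sup' Finset.univ_nonempty fun a => |η a|) (Q y))
    (Φ : X → Y → ℝ) (zm : Y → Z) (w : Z → ℝ) :
    ∃! p : (X → Y → ℝ) × (X → Y → ℝ),
      (∀ x y, p.1 x y + p.2 x y ≥ Φ x y - w (zm y)) ∧
      ∀ U' V' : X → Y → ℝ, (∀ x y, U' x y + V' x y ≥ Φ x y - w (zm y)) →
        Gfun n P p.1 + Hfun m Q p.2 ≤ Gfun n P U' + Hfun m Q V' := by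
  have hP x : Integrable (fun ε => ‖ε‖) (P x) := by
    simpa only [sup'_univ_abs_eq_norm] using hPint x
  have hQ y : Integrable (fun η => ‖η‖) (Q y) := by
    simpa only [sup'_univ_abs_eq_norm] using hQint y
  have hF := (strictConvexOn_Gfun_add_Hfun hn hm hP hQ hPpos hQpos).subset (Set.subset_univ _)
    (convex_dualFeasibleSet fun x y => Φ x y - w (zm y))
  obtain ⟨p, hp, hpmin⟩ := exists_isMinOn_Gfun_add_Hfun hn hm hP hQ fun x y => Φ x y - w (zm y)
  refine ⟨p, ⟨hp, fun U' V' h => isMinOn_iff.1 hpmin (U', V') h⟩, fun q ⟨hq, hqmin⟩ => ?_⟩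
  exact hF.eq_of_isMinOn (isMinOn_iff.2 fun q' hq' => hqmin q'.1 q'.2 hq') hpmin hq hp

/-- Existence and uniqueness for problem (D'). For every tax vector
`w : Z → ℝ`, the problem of minimizing `G(U) + H(V)` subject to
`U_{xy} + V_{xy} ≥ Φ_{xy} − w_{z(y)}` has a unique optimal solution. -/
theorem stmt17
    (n : X → ℝ) (m : Y → ℝ) (hn : ∀ x, 0 < n x) (hm : ∀ y, 0 < m y)
    (P : X → Measure (Option Y → ℝ)) (Q : Y → Measure (Option X → ℝ))
    [∀ x, IsProbabilityMeasure (P x)] [∀ y, IsProbabilityMeasure (Q y)]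
    (hPac : ∀ x, P x ≪ (volume : Measure (Option Y → ℝ)))
    (hPpos : ∀ x, (volume : Measure (Option Y → ℝ)) ≪ P x)
    (hQac : ∀ y, Q y ≪ (volume : Measure (Option X → ℝ)))
    (hQpos : ∀ y, (volume : Measure (Option X → ℝ)) ≪ Q y)
    (hPint : ∀ x, Integrable (fun ε : Option Y → ℝ =>
      Finset.univ.sup' Finset.univ_nonempty fun a => |ε a|) (P x))
    (hQint : ∀ y, Integrable (fun η : Option X → ℝ =>
      Finset.univ.sup' Finset.univ_nonempty fun a => |η a|) (Q y))
    (Φ : X → Y → ℝ) (zm : Y → Z) (w : Z → ℝ) :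
    ∃! p : (X → Y → ℝ) × (X → Y → ℝ),
      (∀ x y, p.1 x y + p.2 x y ≥ Φ x y - w (zm y)) ∧
      ∀ U' V' : X → Y → ℝ, (∀ x y, U' x y + V' x y ≥ Φ x y - w (zm y)) →
        Gfun n P p.1 + Hfun m Q p.2 ≤ Gfun n P U' + Hfun m Q V' :=
  stmt17_general n m hn hm P Q hPpos hQpos hPint hQint Φ zm w

end
end
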